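/- arXiv:math-ph/0412010 — 6 statements merged into one kernel-verified Lean document; each statement's English description precedes it below -/
import Mathlib

section
/- The degenerate Lauricella series Φ_D converges absolutely on its natural domain: for every α, β_2, …, β_N ∈ ℂ, every γ ∈ ℂ that is not a nonpositive integer, every t_1 ∈ ℂ, and all t_2, …, t_N ∈ ℂ with |t_j| < 1 for j = 2, …, N, the multiple series Φ_D(α, β_2, …, β_N, γ; t) = Σ_{m ∈ (ℤ_{≥0})^N} [(α)_{|m|} (β_2)_{m_2} ⋯ (β_N)_{m_N} / ((γ)_{|m|} (1)_{m_1} ⋯ (1)_{m_N})] · t_1^{m_1} ⋯ t_N^{m_N} converges absolutely. -/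
/-!
Since `γ` stays away from `0, -1, -2, …`, there is `S` with `j + 1 ≤ S ‖γ + j‖` for all `j`.
Hence each factor of `(α)_n / (γ)_n = ∏_{j<n} (α + j) / (γ + j)` has norm at most
`1 + ‖α - γ‖ S / (j + 1)`, and the product grows at most like a power `(n + 1) ^ K`; the case
`γ = 1` gives the same for `(β)_k / k!`. As `|m| + 1 ≤ ∏ i, (m i + 1)`, the term is dominated by a
product of one-variable majorants, `(k + 1) ^ K ‖t_1‖ ^ k / k!` in the first coordinate and
`(k + 1) ^ (K + B_i) ‖t_i‖ ^ k` with `‖t_i‖ < 1` in the others. All of them are summable, and so is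
a product of nonnegative summable sequences over `ℕ^N`.
-/

/-- The general term of the degenerate Lauricella series `Φ_D`.
For a multi-index `m : Fin N → ℕ` (coordinate `i` representing the classical index `i+1`),
the term is
`(α)_{|m|} (β_2)_{m_2} ⋯ (β_N)_{m_N} / ((γ)_{|m|} (1)_{m_1} ⋯ (1)_{m_N}) · t^m`,
where `(x)_k` is the Pochhammer symbol and `(1)_{m_i} = m_i!`.
The entry `β 0` (i.e. "β_1") does not occur. -/
noncomputable def phiDTerm {N : ℕ} (hN : 0 < N) (α γ : ℂ) (β : Fin N → ℂ)
    (t : Fin N → ℂ) (m : Fin N → ℕ) : ℂ :=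
  ((ascPochhammer ℂ (∑ i, m i)).eval α *
      ∏ i ∈ Finset.univ.erase (⟨0, hN⟩ : Fin N), (ascPochhammer ℂ (m i)).eval (β i)) /
    ((ascPochhammer ℂ (∑ i, m i)).eval γ * ∏ i, (Nat.factorial (m i) : ℂ)) *
    ∏ i, t i ^ m i

open Finset
open scoped Nat

theorem prod_range_one_add_div_le_pow {c : ℝ} (hc : 0 ≤ c) {L : ℕ} (hL : c ≤ L) (n : ℕ) :
    ∏ j ∈ range n, (1 + c / ((j : ℝ) + 1)) ≤ ((n : ℝ) + 1) ^ L := by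
  induction n with
  | zero => simp
  | succ n ih =>
    have hn : (0 : ℝ) < n + 1 := by positivity
    have bernoulli : 1 + c / ((n : ℝ) + 1) ≤ (1 + 1 / ((n : ℝ) + 1)) ^ L := calc
      1 + c / ((n : ℝ) + 1) ≤ 1 + L * (1 / ((n : ℝ) + 1)) := by
        rw [mul_one_div]; gcongr
      _ ≤ (1 + 1 / ((n : ℝ) + 1)) ^ L := one_add_mul_le_pow (by linarith [one_div_pos.2 hn]) L
    calc ∏ j ∈ range (n + 1), (1 + c / ((j : ℝ) + 1))
        ≤ ((n : ℝ) + 1) ^ L * (1 + 1 / ((n : ℝ) + 1)) ^ L := by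
          rw [prod_range_succ]; gcongr
      _ = (((n + 1 : ℕ) : ℝ) + 1) ^ L := by
          rw [← mul_pow]; congr 1; push_cast; field_simp

theorem Finset.sum_add_one_le_prod_add_one {ι : Type*} (s : Finset ι) (m : ι → ℕ) :
    ∑ i ∈ s, m i + 1 ≤ ∏ i ∈ s, (m i + 1) := by
  classical
  induction s using Finset.cons_induction with
  | empty => simp
  | cons a s _ ih =>
    rw [sum_cons, prod_cons]
    have : 1 ≤ ∏ i ∈ s, (m i + 1) := one_le_prod' fun i _ => Nat.le_add_left 1 (m i)
    nlinarith

theorem summable_natCast_add_one_pow_mul_geometric (L : ℕ) {r : ℝ} (hr₀ : 0 ≤ r) (hr₁ : r < 1) :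
    Summable fun k : ℕ => ((k : ℝ) + 1) ^ L * r ^ k := by
  have hr : ‖r‖ < 1 := by rwa [Real.norm_of_nonneg hr₀]
  refine .of_nonneg_of_le (fun k => by positivity) (fun k => ?_)
    (summable_descFactorial_mul_geometric_of_norm_lt_one L hr)
  gcongr
  have := Nat.pow_sub_le_descFactorial (k + L) L
  rw [show k + L + 1 - L = k + 1 by omega] at this
  exact_mod_cast this

theorem summable_natCast_add_one_pow_mul_pow_div_factorial (L : ℕ) {r : ℝ} (hr : 0 ≤ r) :
    Summable fun k : ℕ => ((k : ℝ) + 1) ^ L * r ^ k / k ! := by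
  refine .of_nonneg_of_le (fun k => by positivity) (fun k => ?_)
    (Real.summable_pow_div_factorial (2 ^ L * r))
  have hk : (k : ℝ) + 1 ≤ 2 ^ k := by exact_mod_cast Nat.lt_two_pow_self
  calc ((k : ℝ) + 1) ^ L * r ^ k / k ! ≤ ((2 : ℝ) ^ k) ^ L * r ^ k / k ! := by gcongr
    _ = (2 ^ L * r) ^ k / k ! := by rw [← pow_mul, mul_comm k L, pow_mul, mul_pow]

theorem summable_fintype_prod_of_nonneg {ι : Type*} [Fintype ι] [DecidableEq ι] {f : ι → ℕ → ℝ}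
    (hf₀ : ∀ i k, 0 ≤ f i k) (hf : ∀ i, Summable (f i)) :
    Summable fun m : ι → ℕ => ∏ i, f i (m i) := by
  refine summable_of_sum_le (c := ∏ i, ∑' k, f i k) (fun m => prod_nonneg fun i _ => hf₀ i _)
    fun u => ?_
  set box := Fintype.piFinset fun i => range (u.sup (· i) + 1)
  have hu : u ⊆ box := fun m hm => Fintype.mem_piFinset.2 fun i =>
    mem_range.2 (Nat.lt_succ_of_le (le_sup (f := (· i)) hm))
  calc ∑ m ∈ u, ∏ i, f i (m i) ≤ ∑ m ∈ box, ∏ i, f i (m i) :=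
        sum_le_sum_of_subset_of_nonneg hu fun m _ _ => prod_nonneg fun i _ => hf₀ i _
    _ = ∏ i, ∑ k ∈ range (u.sup (· i) + 1), f i k := (prod_univ_sum _ _).symm
    _ ≤ ∏ i, ∑' k, f i k := prod_le_prod (fun i _ => sum_nonneg fun k _ => hf₀ i k)
        fun i _ => (hf i).sum_le_tsum _ fun k _ => hf₀ i k

theorem ascPochhammer_eval_eq_prod_range {R : Type*} [CommSemiring R] (n : ℕ) (r : R) :
    (ascPochhammer R n).eval r = ∏ j ∈ range n, (r + j) := by
  induction n with
  | zero => simp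
  | succ n ih => rw [ascPochhammer_succ_eval, ih, prod_range_succ]

section NormedField

variable {𝕜 : Type*} [NormedField 𝕜]

theorem norm_ascPochhammer_eval_le_pow_mul {α γ : 𝕜} {S : ℝ}
    (hS : ∀ j : ℕ, (j : ℝ) + 1 ≤ S * ‖γ + j‖) {L : ℕ} (hL : ‖α - γ‖ * S ≤ L) (n : ℕ) :
    ‖(ascPochhammer 𝕜 n).eval α‖ ≤ ((n : ℝ) + 1) ^ L * ‖(ascPochhammer 𝕜 n).eval γ‖ := by
  have hS₀ : 0 ≤ S := by
    by_contra! h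
    linarith [hS 0, mul_nonpos_of_nonpos_of_nonneg h.le (norm_nonneg (γ + (0 : ℕ)))]
  set c := ‖α - γ‖ * S
  have hfactor (j : ℕ) : ‖α + j‖ ≤ ‖γ + j‖ * (1 + c / ((j : ℝ) + 1)) := by
    have hj : (0 : ℝ) < j + 1 := by positivity
    have hshift : ‖α - γ‖ ≤ ‖γ + j‖ * c / ((j : ℝ) + 1) := by
      rw [le_div_iff₀ hj]
      nlinarith [hS j, norm_nonneg (α - γ)]
    calc ‖α + j‖ = ‖(γ + j) + (α - γ)‖ := by ring_nf
      _ ≤ ‖γ + j‖ + ‖α - γ‖ := norm_add_le _ _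
      _ ≤ ‖γ + j‖ * (1 + c / ((j : ℝ) + 1)) := by rw [mul_one_add, ← mul_div_assoc]; linarith
  rw [ascPochhammer_eval_eq_prod_range, ascPochhammer_eval_eq_prod_range, norm_prod, norm_prod]
  calc ∏ j ∈ range n, ‖α + j‖ ≤ ∏ j ∈ range n, ‖γ + j‖ * (1 + c / ((j : ℝ) + 1)) :=
        prod_le_prod (fun j _ => norm_nonneg _) fun j _ => hfactor j
    _ = (∏ j ∈ range n, (1 + c / ((j : ℝ) + 1))) * ∏ j ∈ range n, ‖γ + j‖ := by
        rw [prod_mul_distrib, mul_comm]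
    _ ≤ ((n : ℝ) + 1) ^ L * ∏ j ∈ range n, ‖γ + j‖ := by
        gcongr
        exact prod_range_one_add_div_le_pow (by positivity) hL n

end NormedField

section RCLike

variable {𝕜 : Type*} [RCLike 𝕜]

theorem exists_natCast_add_one_le_mul_norm_add {γ : 𝕜} (hγ : ∀ k : ℕ, γ ≠ -k) :
    ∃ S : ℝ, ∀ j : ℕ, (j : ℝ) + 1 ≤ S * ‖γ + j‖ := by
  have hpos (j : ℕ) : 0 < ‖γ + j‖ := norm_pos_iff.2 fun h => hγ j (eq_neg_of_add_eq_zero_left h)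
  have hlarge : ∀ᶠ j : ℕ in Filter.atTop, ((j : ℝ) + 1) / ‖γ + j‖ ≤ 2 := by
    filter_upwards [Filter.eventually_ge_atTop ⌈2 * ‖γ‖ + 1⌉₊] with j hj
    have hj' : 2 * ‖γ‖ + 1 ≤ j := Nat.ceil_le.1 hj
    have : (j : ℝ) - ‖γ‖ ≤ ‖γ + j‖ := by
      simpa [RCLike.norm_natCast, add_comm] using norm_sub_norm_le (j : 𝕜) (-γ)
    rw [div_le_iff₀ (hpos j)]
    linarith
  obtain ⟨S, hS⟩ := (Filter.isBoundedUnder_of_eventually_le hlarge).bddAbove_range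
  exact ⟨S, fun j => (div_le_iff₀ (hpos j)).1 (hS ⟨j, rfl⟩)⟩

theorem exists_norm_ascPochhammer_eval_le_pow_mul {γ : 𝕜} (hγ : ∀ k : ℕ, γ ≠ -k) (α : 𝕜) :
    ∃ K : ℕ, ∀ n, ‖(ascPochhammer 𝕜 n).eval α‖ ≤ ((n : ℝ) + 1) ^ K * ‖(ascPochhammer 𝕜 n).eval γ‖ :=
  let ⟨_, hS⟩ := exists_natCast_add_one_le_mul_norm_add hγ
  ⟨_, norm_ascPochhammer_eval_le_pow_mul hS (Nat.le_ceil _)⟩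

theorem exists_norm_ascPochhammer_eval_le_pow_mul_factorial (β : 𝕜) :
    ∃ B : ℕ, ∀ k, ‖(ascPochhammer 𝕜 k).eval β‖ ≤ ((k : ℝ) + 1) ^ B * k ! := by
  have h₁ (k : ℕ) : (1 : 𝕜) ≠ -k := by
    rw [ne_eq, eq_neg_iff_add_eq_zero, add_comm]; exact Nat.cast_add_one_ne_zero k
  obtain ⟨B, hB⟩ := exists_norm_ascPochhammer_eval_le_pow_mul h₁ β
  exact ⟨B, fun k => by simpa [RCLike.norm_natCast] using hB k⟩

end RCLike

theorem norm_phiDTerm {N : ℕ} (hN : 0 < N) (α γ : ℂ) (β t : Fin N → ℂ) (m : Fin N → ℕ) :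
    ‖phiDTerm hN α γ β t m‖ =
      ‖(ascPochhammer ℂ (∑ i, m i)).eval α‖ / ‖(ascPochhammer ℂ (∑ i, m i)).eval γ‖ *
        ∏ i, ‖t i‖ ^ m i / (m i)! *
          if i = ⟨0, hN⟩ then 1 else ‖(ascPochhammer ℂ (m i)).eval (β i)‖ := by
  have hβ : ∏ i ∈ univ.erase ⟨0, hN⟩, ‖(ascPochhammer ℂ (m i)).eval (β i)‖ =
      ∏ i, if i = ⟨0, hN⟩ then 1 else ‖(ascPochhammer ℂ (m i)).eval (β i)‖ := by
    rw [prod_ite, prod_const_one, one_mul, filter_ne']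
  simp only [phiDTerm, norm_mul, norm_div, norm_prod, norm_pow, Complex.norm_natCast, hβ,
    prod_mul_distrib, prod_div_distrib]
  ring

/-- The factor `(k + 1) ^ K` is coordinate `i`'s share of the bound
`(|m| + 1) ^ K ≤ ∏ i, (m i + 1) ^ K` on `‖(α)_{|m|} / (γ)_{|m|}‖`. -/
noncomputable def phiDMajorant {N : ℕ} (hN : 0 < N) (K : ℕ) (β t : Fin N → ℂ) (i : Fin N)
    (k : ℕ) : ℝ :=
  ((k : ℝ) + 1) ^ K * ‖t i‖ ^ k / k ! *
    if i = ⟨0, hN⟩ then 1 else ‖(ascPochhammer ℂ k).eval (β i)‖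

theorem phiDMajorant_nonneg {N : ℕ} (hN : 0 < N) (K : ℕ) (β t : Fin N → ℂ) (i : Fin N)
    (k : ℕ) : 0 ≤ phiDMajorant hN K β t i k := by
  unfold phiDMajorant; positivity

theorem norm_phiDTerm_le {N : ℕ} (hN : 0 < N) {α γ : ℂ} (hγ : ∀ k : ℕ, γ ≠ -k) {K : ℕ}
    (hK : ∀ n, ‖(ascPochhammer ℂ n).eval α‖ ≤ ((n : ℝ) + 1) ^ K * ‖(ascPochhammer ℂ n).eval γ‖)
    (β t : Fin N → ℂ) (m : Fin N → ℕ) :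
    ‖phiDTerm hN α γ β t m‖ ≤ ∏ i, phiDMajorant hN K β t i (m i) := by
  have hγn : 0 < ‖(ascPochhammer ℂ (∑ i, m i)).eval γ‖ := by
    refine norm_pos_iff.2 fun h => ?_
    obtain ⟨k, -, hk⟩ := (ascPochhammer_eval_eq_zero_iff _ γ).1 h
    exact hγ k (by rw [hk, neg_neg])
  have hsum : ((∑ i, m i : ℕ) : ℝ) + 1 ≤ ∏ i, ((m i : ℝ) + 1) := by
    exact_mod_cast sum_add_one_le_prod_add_one univ m
  have hratio : ‖(ascPochhammer ℂ (∑ i, m i)).eval α‖ / ‖(ascPochhammer ℂ (∑ i, m i)).eval γ‖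
      ≤ ∏ i, ((m i : ℝ) + 1) ^ K := by
    rw [div_le_iff₀ hγn, prod_pow]
    exact (hK _).trans (by gcongr)
  calc ‖phiDTerm hN α γ β t m‖ = _ := norm_phiDTerm hN α γ β t m
    _ ≤ (∏ i, ((m i : ℝ) + 1) ^ K) * ∏ i, ‖t i‖ ^ m i / (m i)! *
          if i = ⟨0, hN⟩ then 1 else ‖(ascPochhammer ℂ (m i)).eval (β i)‖ := by
        gcongr
    _ = ∏ i, phiDMajorant hN K β t i (m i) := by
        rw [← prod_mul_distrib]
        exact prod_congr rfl fun i _ => by unfold phiDMajorant; ring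

theorem summable_phiDMajorant {N : ℕ} (hN : 0 < N) (K : ℕ) (β t : Fin N → ℂ)
    (ht : ∀ i : Fin N, i ≠ ⟨0, hN⟩ → ‖t i‖ < 1) (i : Fin N) :
    Summable (phiDMajorant hN K β t i) := by
  unfold phiDMajorant
  by_cases hi : i = ⟨0, hN⟩
  · simpa only [hi, if_true, mul_one] using
      summable_natCast_add_one_pow_mul_pow_div_factorial K (norm_nonneg (t ⟨0, hN⟩))
  obtain ⟨B, hB⟩ := exists_norm_ascPochhammer_eval_le_pow_mul_factorial (β i)
  simp only [hi, if_false]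
  refine .of_nonneg_of_le (fun k => by positivity) (fun k => ?_)
    (summable_natCast_add_one_pow_mul_geometric (K + B) (norm_nonneg (t i)) (ht i hi))
  calc ((k : ℝ) + 1) ^ K * ‖t i‖ ^ k / k ! * ‖(ascPochhammer ℂ k).eval (β i)‖
      ≤ ((k : ℝ) + 1) ^ K * ‖t i‖ ^ k / k ! * (((k : ℝ) + 1) ^ B * k !) := by gcongr; exact hB k
    _ = ((k : ℝ) + 1) ^ (K + B) * ‖t i‖ ^ k := by field_simp; ring

/-- **Absolute convergence of `Φ_D` on its natural domain**: for every `α, β_2, …, β_N ∈ ℂ`,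
every `γ ∈ ℂ` which is not a nonpositive integer, every `t_1 ∈ ℂ` and all `t_2, …, t_N ∈ ℂ`
of modulus `< 1`, the multiple series `Φ_D(α, β_2, …, β_N, γ; t)` converges absolutely. -/
theorem phiD_abs_convergence (N : ℕ) (hN : 0 < N) (α γ : ℂ) (β : Fin N → ℂ)
    (hγ : ∀ k : ℕ, γ ≠ -(k : ℂ)) (t : Fin N → ℂ)
    (ht : ∀ i : Fin N, i ≠ ⟨0, hN⟩ → ‖t i‖ < 1) :
    Summable (fun m : Fin N → ℕ => ‖phiDTerm hN α γ β t m‖) := by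
  obtain ⟨K, hK⟩ := exists_norm_ascPochhammer_eval_le_pow_mul hγ α
  exact .of_nonneg_of_le (fun m => norm_nonneg _) (norm_phiDTerm_le hN hγ hK β t)
    (summable_fintype_prod_of_nonneg (phiDMajorant_nonneg hN K β t)
      (summable_phiDMajorant hN K β t ht))
end

section
/- Closedness of the τ-form for the degenerate Schlesinger system: let A_1, …, A_{N+2} : U → M_2(ℂ) be holomorphic maps solving the degenerate Schlesinger system S(1,…,1,2;N) on U, and suppose in addition that on U: tr A_1(t) = t_1; tr A_j = θ_j is a constant for j = 2, …, N+2; det A_j = 0 for j = 1, …, N+1; tr(A_1(t) A_{N+2}(t)) = t_1 θ_{N+2}; and −Σ_{j=2}^{N+2} A_j(t) equals the constant diagonal matrix diag(ρ, ρ + θ_{N+3}) for constants ρ, θ_{N+3} ∈ ℂ. Define holomorphic functions H_1, …, H_N on U by H_1 = −det(A_{N+2})/t_1 − Σ_{j=2}^{N+1} (tr(A_1 A_j) − t_1 θ_j)/(t_1 t_j) and, for i = 2, …, N, H_i = (tr(A_i A_1) − t_1 θ_i)/t_i² + Σ_{j=2, j≠i}^{N+2} (tr(A_i A_j) − θ_i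 θ_j)/(t_i − t_j) (where t_{N+1} = 1 and t_{N+2} = 0). Then the 1-form ω_0 = Σ_{i=1}^N H_i dt_i is closed, i.e. ∂H_i/∂t_j = ∂H_j/∂t_i on U for all 1 ≤ i, j ≤ N. -/
open Finset

/-- Entrywise partial derivative of a matrix-valued map in the `k`-th coordinate
direction. -/
noncomputable def pder {N : ℕ} (k : Fin N)
    (f : (Fin N → ℂ) → Matrix (Fin 2) (Fin 2) ℂ) (t : Fin N → ℂ) :
    Matrix (Fin 2) (Fin 2) ℂ :=
  Matrix.of fun a b => fderiv ℂ (fun s => f s a b) t (Pi.single k 1)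

/-- Matrix commutator `[X, Y] = XY − YX`. -/
noncomputable def mComm (X Y : Matrix (Fin 2) (Fin 2) ℂ) : Matrix (Fin 2) (Fin 2) ℂ :=
  X * Y - Y * X

/-- The value `t_j` for the classical index `j ∈ {1, …, N+2}`: the coordinate
`t ⟨j−1⟩` for `1 ≤ j ≤ N`, and the frozen values `t_{N+1} = 1`, `t_{N+2} = 0`. -/
def tval {N : ℕ} (t : Fin N → ℂ) (j : ℕ) : ℂ :=
  if h : 1 ≤ j ∧ j ≤ N then t ⟨j - 1, by omega⟩ else if j = N + 1 then 1 else 0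

/-- The set of points `t ∈ ℂ^N` with `t_i ≠ 0`, `t_i ≠ 1` and `t_i ≠ t_j` for `i ≠ j`. -/
def goodDomain (N : ℕ) : Set (Fin N → ℂ) :=
  {t | (∀ i, t i ≠ 0 ∧ t i ≠ 1) ∧ ∀ i j, i ≠ j → t i ≠ t j}

/-- `A 1, …, A (N+2) : U → M₂(ℂ)` solve the degenerate Schlesinger system
`S(1,…,1,2;N)`: each entry is holomorphic on `U`, and the partial differential
equations obtained by equating coefficients of `dt_1, …, dt_N` in
`dA_1 = Σ_{i=2}^{N+1} [A_i, A_1] d log t_i + (A_1 + [A_{N+2}, A_1]) d log t_1`,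
`dA_j = Σ_{i=2,i≠j}^{N+2} [A_i, A_j] d log(t_j − t_i) + ([A_1,A_j]/t_j) d log(t_j/t_1)`
for `j = 2, …, N+1`, and
`dA_{N+2} = Σ_{i=2}^{N+1} (([A_i,A_1]/t_i) d log(t_i/t_1) + [A_i,A_{N+2}] d log t_i)`
hold on `U` (with `t_{N+1} = 1`, `t_{N+2} = 0` held constant).  The coordinate
`k : Fin N` represents the variable `t_{k+1}`. -/
def SolvesDegSch {N : ℕ} (U : Set (Fin N → ℂ))
    (A : ℕ → (Fin N → ℂ) → Matrix (Fin 2) (Fin 2) ℂ) : Prop :=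
  (∀ j ∈ Icc 1 (N + 2), ∀ a b : Fin 2, DifferentiableOn ℂ (fun t => A j t a b) U) ∧
  ∀ t ∈ U, ∀ k : Fin N,
    (pder k (A 1) t =
      if (k : ℕ) = 0 then (t k)⁻¹ • (A 1 t + mComm (A (N + 2) t) (A 1 t))
      else (t k)⁻¹ • mComm (A ((k : ℕ) + 1) t) (A 1 t)) ∧
    (∀ j ∈ Icc 2 (N + 1),
      pder k (A j) t =
        if (k : ℕ) + 1 = j then
          (∑ i ∈ (Icc 2 (N + 2)).erase j,
            (tval t j - tval t i)⁻¹ • mComm (A i t) (A j t)) +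
            ((tval t j) ^ 2)⁻¹ • mComm (A 1 t) (A j t)
        else if (k : ℕ) = 0 then
          (-(tval t j * t k)⁻¹) • mComm (A 1 t) (A j t)
        else (-(tval t j - t k)⁻¹) • mComm (A ((k : ℕ) + 1) t) (A j t)) ∧
    (pder k (A (N + 2)) t =
      if (k : ℕ) = 0 then
        ∑ i ∈ Icc 2 (N + 1), (-(tval t i * t k)⁻¹) • mComm (A i t) (A 1 t)
      else ((t k) ^ 2)⁻¹ • mComm (A ((k : ℕ) + 1) t) (A 1 t) +
        (t k)⁻¹ • mComm (A ((k : ℕ) + 1) t) (A (N + 2) t))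

/-- The Hamiltonians `H_1, …, H_N` of Proposition 2.1 (the coordinate `i : Fin N`
represents the classical index `i+1`):
`H_1 = −det A_{N+2}/t_1 − Σ_{j=2}^{N+1} (tr(A_1 A_j) − t_1 θ_j)/(t_1 t_j)` and, for
`i = 2, …, N`,
`H_i = (tr(A_i A_1) − t_1 θ_i)/t_i² + Σ_{j=2,j≠i}^{N+2} (tr(A_i A_j) − θ_i θ_j)/(t_i − t_j)`. -/
noncomputable def degSchH {N : ℕ} (hN : 0 < N)
    (A : ℕ → (Fin N → ℂ) → Matrix (Fin 2) (Fin 2) ℂ) (θ : ℕ → ℂ)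
    (i : Fin N) (t : Fin N → ℂ) : ℂ :=
  if (i : ℕ) = 0 then
    -(A (N + 2) t).det / t i -
      ∑ j ∈ Icc 2 (N + 1), ((A 1 t * A j t).trace - t i * θ j) / (t i * tval t j)
  else
    ((A ((i : ℕ) + 1) t * A 1 t).trace - t ⟨0, hN⟩ * θ ((i : ℕ) + 1)) / (t i) ^ 2 +
      ∑ j ∈ (Icc 2 (N + 2)).erase ((i : ℕ) + 1),
        ((A ((i : ℕ) + 1) t * A j t).trace - θ ((i : ℕ) + 1) * θ j) / (t i - tval t j)

/-!
Each mixed partial derivative is computed in closed form. By the Schlesinger equations the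
derivative of a trace `tr(A_p A_q)` is a combination of triple traces `tr(X [Y, Z])`
(`traceComm`), which are cyclic and alternating in their arguments. In `∂H_i/∂t_k` the triple
traces involving a third residue `A_j` come in pairs of opposite sign and cancel; what survives is
`(tr(A_i A_k) − θ_i θ_k)/(t_i − t_k)²` when `i, k ≥ 2` and `(tr(A_1 A_i) − t_1 θ_i)/(t_1 t_i²)`
when one of the two indices is `1`, and both are symmetric in `i` and `k`.
-/

local notation "M₂" => Matrix (Fin 2) (Fin 2) ℂ

variable {N : ℕ}

def HasPartialDerivAt (k : Fin N) (f : (Fin N → ℂ) → ℂ) (d : ℂ) (t : Fin N → ℂ) : Prop :=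
  DifferentiableAt ℂ f t ∧ fderiv ℂ f t (Pi.single k 1) = d

variable {k : Fin N} {t : Fin N → ℂ}

namespace HasPartialDerivAt

variable {f g : (Fin N → ℂ) → ℂ} {d e : ℂ}

lemma congr_deriv (hf : HasPartialDerivAt k f d t) (h : d = e) : HasPartialDerivAt k f e t :=
  h ▸ hf

lemma add (hf : HasPartialDerivAt k f d t) (hg : HasPartialDerivAt k g e t) :
    HasPartialDerivAt k (fun s => f s + g s) (d + e) t :=
  ⟨hf.1.add hg.1, by rw [fderiv_fun_add hf.1 hg.1, add_apply, hf.2, hg.2]⟩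

lemma neg (hf : HasPartialDerivAt k f d t) : HasPartialDerivAt k (fun s => -f s) (-d) t :=
  ⟨hf.1.neg, by rw [fderiv_fun_neg, neg_apply, hf.2]⟩

lemma sub (hf : HasPartialDerivAt k f d t) (hg : HasPartialDerivAt k g e t) :
    HasPartialDerivAt k (fun s => f s - g s) (d - e) t :=
  ⟨hf.1.sub hg.1, by rw [fderiv_fun_sub hf.1 hg.1, sub_apply, hf.2, hg.2]⟩

lemma mul (hf : HasPartialDerivAt k f d t) (hg : HasPartialDerivAt k g e t) :
    HasPartialDerivAt k (fun s => f s * g s) (d * g t + f t * e) t :=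
  ⟨hf.1.mul hg.1, by
    rw [fderiv_fun_mul hf.1 hg.1, add_apply, smul_apply, smul_apply, hf.2, hg.2, smul_eq_mul,
      smul_eq_mul]
    ring⟩

lemma pow (hf : HasPartialDerivAt k f d t) (n : ℕ) :
    HasPartialDerivAt k (fun s => f s ^ n) (n * f t ^ (n - 1) * d) t :=
  ⟨hf.1.pow n, by
    rw [show (fun s => f s ^ n) = (· ^ n) ∘ f from rfl,
      ((hasDerivAt_pow n (f t)).comp_hasFDerivAt t hf.1.hasFDerivAt).fderiv, smul_apply, hf.2,
      smul_eq_mul]⟩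

lemma inv (hg : HasPartialDerivAt k g e t) (h0 : g t ≠ 0) :
    HasPartialDerivAt k (fun s => (g s)⁻¹) (-e / g t ^ 2) t :=
  ⟨hg.1.inv h0, by
    have h := ((hasDerivAt_inv h0).comp_hasFDerivAt t hg.1.hasFDerivAt).fderiv
    rw [show (fun s => (g s)⁻¹) = (·⁻¹) ∘ g from rfl, h, smul_apply, hg.2, smul_eq_mul]
    ring⟩

lemma div (hf : HasPartialDerivAt k f d t) (hg : HasPartialDerivAt k g e t) (h0 : g t ≠ 0) :
    HasPartialDerivAt k (fun s => f s / g s) ((d * g t - f t * e) / g t ^ 2) t := by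
  simp only [div_eq_mul_inv]
  refine (hf.mul (hg.inv h0)).congr_deriv ?_
  field_simp
  ring

lemma sum {ι : Type*} (S : Finset ι) {F : ι → (Fin N → ℂ) → ℂ} {D : ι → ℂ}
    (hF : ∀ j ∈ S, HasPartialDerivAt k (F j) (D j) t) :
    HasPartialDerivAt k (fun s => ∑ j ∈ S, F j s) (∑ j ∈ S, D j) t :=
  ⟨DifferentiableAt.fun_sum fun j hj => (hF j hj).1, by
    rw [fderiv_fun_sum fun j hj => (hF j hj).1, _root_.sum_apply]
    exact Finset.sum_congr rfl fun j hj => (hF j hj).2⟩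

end HasPartialDerivAt

lemma hasPartialDerivAt_const (c : ℂ) : HasPartialDerivAt k (fun _ => c) 0 t :=
  ⟨differentiableAt_const c, by rw [fderiv_fun_const, Pi.zero_apply, zero_apply]⟩

lemma hasPartialDerivAt_apply_self : HasPartialDerivAt k (fun s => s k) 1 t :=
  ⟨differentiableAt_apply k t, by simp [fderiv_apply]⟩

lemma hasPartialDerivAt_apply_of_ne {i : Fin N} (h : i ≠ k) :
    HasPartialDerivAt k (fun s => s i) 0 t :=
  ⟨differentiableAt_apply i t, by simp [fderiv_apply, h]⟩

lemma tval_val_add_one (i : Fin N) : tval t (i + 1) = t i := by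
  simp [tval]

lemma tval_N_add_two : tval t (N + 2) = 0 := by
  simp [tval]

lemma hasPartialDerivAt_tval_of_ne {j : ℕ} (h : j ≠ k + 1) :
    HasPartialDerivAt k (fun s => tval s j) 0 t := by
  unfold tval
  split_ifs with hj
  · exact hasPartialDerivAt_apply_of_ne fun hk => h (by rw [← hk, Fin.val_mk]; omega)
  all_goals exact hasPartialDerivAt_const _

lemma apply_ne_zero_of_mem_goodDomain (hgd : t ∈ goodDomain N) (i : Fin N) : t i ≠ 0 :=
  (hgd.1 i).1

lemma tval_ne_zero_of_mem_goodDomain (hgd : t ∈ goodDomain N) {j : ℕ} (hj : j ∈ Icc 1 (N + 1)) :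
    tval t j ≠ 0 := by
  rw [mem_Icc] at hj
  unfold tval
  split_ifs <;> first | exact (hgd.1 _).1 | exact one_ne_zero | omega

lemma sub_tval_ne_zero_of_mem_goodDomain (hgd : t ∈ goodDomain N) (i : Fin N) {j : ℕ}
    (hj : j ∈ Icc 1 (N + 2)) (hji : j ≠ i + 1) : t i - tval t j ≠ 0 := by
  rw [sub_ne_zero]
  rw [mem_Icc] at hj
  unfold tval
  split_ifs with h
  · exact hgd.2 _ _ fun hi => hji (by rw [hi, Fin.val_mk]; omega)
  · exact (hgd.1 i).2
  · exact (hgd.1 i).1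

lemma sub_ne_zero_of_mem_goodDomain (hgd : t ∈ goodDomain N) {i j : Fin N} (h : i ≠ j) :
    t i - t j ≠ 0 :=
  sub_ne_zero.2 (hgd.2 i j h)

noncomputable def traceComm (X Y Z : M₂) : ℂ :=
  (X * mComm Y Z).trace

lemma trace_mComm (X Y : M₂) : (mComm X Y).trace = 0 := by
  rw [mComm, Matrix.trace_sub, Matrix.trace_mul_comm, sub_self]

lemma trace_mul_mComm (X Y Z : M₂) : (X * mComm Y Z).trace = traceComm X Y Z :=
  rfl

lemma trace_mComm_mul (X Y Z : M₂) : (mComm X Y * Z).trace = traceComm Z X Y :=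
  Matrix.trace_mul_comm _ _

lemma traceComm_cycle (X Y Z : M₂) : traceComm X Y Z = traceComm Y Z X := by
  rw [traceComm, Matrix.trace_mul_comm, traceComm, mComm, mComm, Matrix.sub_mul, Matrix.mul_sub,
    Matrix.trace_sub, Matrix.trace_sub, Matrix.mul_assoc Z, Matrix.trace_mul_comm Z,
    Matrix.mul_assoc, Matrix.mul_assoc]

lemma traceComm_swap (X Y Z : M₂) : traceComm X Z Y = -traceComm X Y Z := by
  rw [traceComm, traceComm, ← Matrix.trace_neg, ← Matrix.mul_neg, mComm, mComm, neg_sub]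

lemma traceComm_self_left (X Y : M₂) : traceComm X X Y = 0 := by
  rw [traceComm, mComm, Matrix.mul_sub, Matrix.trace_sub, ← Matrix.mul_assoc,
    Matrix.trace_mul_comm (X * X) Y, Matrix.trace_mul_comm X (Y * X), Matrix.mul_assoc, sub_self]

lemma traceComm_self_right (X Y : M₂) : traceComm X Y Y = 0 := by
  rw [traceComm, mComm, sub_self, Matrix.mul_zero, Matrix.trace_zero]

def HasMatrixPartialDerivAt (k : Fin N) (F : (Fin N → ℂ) → M₂) (D : M₂) (t : Fin N → ℂ) :
    Prop :=
  ∀ a b, HasPartialDerivAt k (fun s => F s a b) (D a b) t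

variable {F G : (Fin N → ℂ) → M₂} {D E : M₂}

namespace HasMatrixPartialDerivAt

lemma of_pder (hF : ∀ a b, DifferentiableAt ℂ (fun s => F s a b) t) (hD : pder k F t = D) :
    HasMatrixPartialDerivAt k F D t := fun a b =>
  ⟨hF a b, by rw [← hD]; rfl⟩

lemma trace_mul (hF : HasMatrixPartialDerivAt k F D t) (hG : HasMatrixPartialDerivAt k G E t) :
    HasPartialDerivAt k (fun s => (F s * G s).trace) ((D * G t).trace + (F t * E).trace) t := by
  simp only [Matrix.trace_fin_two, Matrix.mul_apply, Fin.sum_univ_two]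
  refine ((((hF 0 0).mul (hG 0 0)).add ((hF 0 1).mul (hG 1 0))).add
    (((hF 1 0).mul (hG 0 1)).add ((hF 1 1).mul (hG 1 1)))).congr_deriv ?_
  ring

lemma det (hF : HasMatrixPartialDerivAt k F D t) :
    HasPartialDerivAt k (fun s => (F s).det) ((F t).trace * D.trace - (F t * D).trace) t := by
  simp only [Matrix.det_fin_two, Matrix.trace_fin_two, Matrix.mul_apply, Fin.sum_univ_two]
  refine (((hF 0 0).mul (hF 1 1)).sub ((hF 0 1).mul (hF 1 0))).congr_deriv ?_
  ring

lemma trace_mul_of_left_comm {C : M₂} {a : ℂ}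
    (hF : HasMatrixPartialDerivAt k F (a • mComm C (F t)) t)
    (hG : HasMatrixPartialDerivAt k G E t) :
    HasPartialDerivAt k (fun s => (F s * G s).trace)
      (a * traceComm (F t) (G t) C + (F t * E).trace) t := by
  refine (hF.trace_mul hG).congr_deriv ?_
  rw [Matrix.smul_mul, Matrix.trace_smul, trace_mComm_mul, traceComm_cycle (G t),
    traceComm_cycle C, smul_eq_mul]

lemma trace_mul_of_comm {C : M₂} {a b : ℂ} (hF : HasMatrixPartialDerivAt k F (a • mComm C (F t)) t)
    (hG : HasMatrixPartialDerivAt k G (b • mComm C (G t)) t) :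
    HasPartialDerivAt k (fun s => (F s * G s).trace) ((a - b) * traceComm (F t) (G t) C) t := by
  refine (hF.trace_mul_of_left_comm hG).congr_deriv ?_
  rw [Matrix.mul_smul, Matrix.trace_smul, trace_mul_mComm, traceComm_swap, smul_eq_mul]
  ring

end HasMatrixPartialDerivAt

namespace SolvesDegSch

variable {U : Set (Fin N → ℂ)} {A : ℕ → (Fin N → ℂ) → M₂}

lemma hasMatrixPartialDerivAt (hsol : SolvesDegSch U A) (hU : IsOpen U) (ht : t ∈ U) {j : ℕ}
    (hj : j ∈ Icc 1 (N + 2)) {D : M₂} (hD : pder k (A j) t = D) :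
    HasMatrixPartialDerivAt k (A j) D t :=
  .of_pder (fun a b => (hsol.1 j hj a b).differentiableAt (hU.mem_nhds ht)) hD

lemma hasMatrixPartialDerivAt_one_of_ne_zero (hsol : SolvesDegSch U A) (hU : IsOpen U) (ht : t ∈ U)
    (hk : (k : ℕ) ≠ 0) :
    HasMatrixPartialDerivAt k (A 1) ((t k)⁻¹ • mComm (A (k + 1) t) (A 1 t)) t :=
  hsol.hasMatrixPartialDerivAt hU ht (by simp) (by rw [(hsol.2 t ht k).1, if_neg hk])

lemma hasMatrixPartialDerivAt_mid_of_ne_zero (hsol : SolvesDegSch U A) (hU : IsOpen U)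
    (ht : t ∈ U) (hk : (k : ℕ) ≠ 0) {j : ℕ} (hj : j ∈ Icc 2 (N + 1)) (hjk : j ≠ k + 1) :
    HasMatrixPartialDerivAt k (A j) ((t k - tval t j)⁻¹ • mComm (A (k + 1) t) (A j t)) t := by
  refine hsol.hasMatrixPartialDerivAt hU ht (by simp at hj ⊢; omega) ?_
  rw [(hsol.2 t ht k).2.1 j hj, if_neg (Ne.symm hjk), if_neg hk, ← inv_neg, neg_sub]

lemma hasMatrixPartialDerivAt_self_of_ne_zero (hsol : SolvesDegSch U A) (hU : IsOpen U) (ht : t ∈ U)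
    (hk : (k : ℕ) ≠ 0) :
    HasMatrixPartialDerivAt k (A (k + 1))
      (∑ l ∈ (Icc 2 (N + 2)).erase (k + 1), (t k - tval t l)⁻¹ • mComm (A l t) (A (k + 1) t) +
        (t k ^ 2)⁻¹ • mComm (A 1 t) (A (k + 1) t)) t := by
  refine hsol.hasMatrixPartialDerivAt hU ht (by simp; omega) ?_
  rw [(hsol.2 t ht k).2.1 (k + 1) (by simp; omega), if_pos rfl, tval_val_add_one]

lemma hasMatrixPartialDerivAt_last_of_ne_zero (hsol : SolvesDegSch U A) (hU : IsOpen U) (ht : t ∈ U)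
    (hk : (k : ℕ) ≠ 0) :
    HasMatrixPartialDerivAt k (A (N + 2))
      ((t k)⁻¹ • mComm (A (k + 1) t) (A (N + 2) t) +
        (t k ^ 2)⁻¹ • mComm (A (k + 1) t) (A 1 t)) t := by
  refine hsol.hasMatrixPartialDerivAt hU ht (by simp) ?_
  rw [(hsol.2 t ht k).2.2, if_neg hk, add_comm]

lemma hasMatrixPartialDerivAt_one_zero (hsol : SolvesDegSch U A) (hU : IsOpen U) (ht : t ∈ U)
    (hN : 0 < N) :
    HasMatrixPartialDerivAt ⟨0, hN⟩ (A 1)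
      ((t ⟨0, hN⟩)⁻¹ • (A 1 t + mComm (A (N + 2) t) (A 1 t))) t :=
  hsol.hasMatrixPartialDerivAt hU ht (by simp) (by rw [(hsol.2 t ht _).1, if_pos rfl])

lemma hasMatrixPartialDerivAt_mid_zero (hsol : SolvesDegSch U A) (hU : IsOpen U) (ht : t ∈ U)
    (hN : 0 < N) {j : ℕ} (hj : j ∈ Icc 2 (N + 1)) :
    HasMatrixPartialDerivAt ⟨0, hN⟩ (A j)
      ((-(tval t j * t ⟨0, hN⟩)⁻¹) • mComm (A 1 t) (A j t)) t := by
  refine hsol.hasMatrixPartialDerivAt hU ht (by simp at hj ⊢; omega) ?_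
  rw [(hsol.2 t ht _).2.1 j hj, if_neg (by simp at hj ⊢; omega), if_pos rfl]

lemma hasMatrixPartialDerivAt_last_zero (hsol : SolvesDegSch U A) (hU : IsOpen U) (ht : t ∈ U)
    (hN : 0 < N) :
    HasMatrixPartialDerivAt ⟨0, hN⟩ (A (N + 2))
      (∑ l ∈ Icc 2 (N + 1), (-(tval t l * t ⟨0, hN⟩)⁻¹) • mComm (A l t) (A 1 t)) t :=
  hsol.hasMatrixPartialDerivAt hU ht (by simp) (by rw [(hsol.2 t ht _).2.2, if_pos rfl])

end SolvesDegSch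

section Hamiltonians

variable {U : Set (Fin N → ℂ)} {A : ℕ → (Fin N → ℂ) → M₂} {θ : ℕ → ℂ} {i : Fin N}
  (hsol : SolvesDegSch U A) (hU : IsOpen U) (ht : t ∈ U) (hgd : t ∈ goodDomain N)
include hsol hU ht hgd

lemma hasPartialDerivAt_firstTerm_of_ne_zero (hN : 0 < N) (hi : (i : ℕ) ≠ 0)
    (hk : (k : ℕ) ≠ 0) (hik : i ≠ k) :
    HasPartialDerivAt k
      (fun s => ((A (i + 1) s * A 1 s).trace - s ⟨0, hN⟩ * θ (i + 1)) / s i ^ 2)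
      (traceComm (A (i + 1) t) (A 1 t) (A (k + 1) t) / (t k * t i * (t k - t i))) t := by
  have hAi := hsol.hasMatrixPartialDerivAt_mid_of_ne_zero hU ht hk (j := i + 1)
    (by simp; omega) (by simpa [Fin.val_eq_val] using hik)
  have hA1 := hsol.hasMatrixPartialDerivAt_one_of_ne_zero hU ht hk
  have h0k : (⟨0, hN⟩ : Fin N) ≠ k := fun h => hk (by rw [← h])
  refine (((hAi.trace_mul_of_comm hA1).sub ((hasPartialDerivAt_apply_of_ne h0k).mul
    (hasPartialDerivAt_const _))).div ((hasPartialDerivAt_apply_of_ne hik).pow 2)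
    (pow_ne_zero 2 (apply_ne_zero_of_mem_goodDomain hgd i))).congr_deriv ?_
  have hti := apply_ne_zero_of_mem_goodDomain hgd i
  have htk := apply_ne_zero_of_mem_goodDomain hgd k
  have htki := sub_ne_zero_of_mem_goodDomain hgd hik.symm
  rw [tval_val_add_one]
  field_simp
  ring

lemma hasPartialDerivAt_pairTerm_of_ne_zero (hi : (i : ℕ) ≠ 0) (hk : (k : ℕ) ≠ 0) (hik : i ≠ k)
    {j : ℕ} (hj : j ∈ Icc 2 (N + 1)) (hji : j ≠ i + 1) (hjk : j ≠ k + 1) :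
    HasPartialDerivAt k
      (fun s => ((A (i + 1) s * A j s).trace - θ (i + 1) * θ j) / (s i - tval s j))
      (-traceComm (A (i + 1) t) (A j t) (A (k + 1) t) / ((t i - t k) * (t k - tval t j))) t := by
  have hAi := hsol.hasMatrixPartialDerivAt_mid_of_ne_zero hU ht hk (j := i + 1)
    (by simp at hj ⊢; omega) (by simpa [Fin.val_eq_val] using hik)
  have hAj := hsol.hasMatrixPartialDerivAt_mid_of_ne_zero hU ht hk hj hjk
  have hj' : j ∈ Icc 1 (N + 2) := by simp at hj ⊢; omega
  refine (((hAi.trace_mul_of_comm hAj).sub (hasPartialDerivAt_const _)).div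
    ((hasPartialDerivAt_apply_of_ne hik).sub (hasPartialDerivAt_tval_of_ne hjk))
    (sub_tval_ne_zero_of_mem_goodDomain hgd i hj' hji)).congr_deriv ?_
  have htij := sub_tval_ne_zero_of_mem_goodDomain hgd i hj' hji
  have htkj := sub_tval_ne_zero_of_mem_goodDomain hgd k hj' hjk
  have htik := sub_ne_zero_of_mem_goodDomain hgd hik
  have htki := sub_ne_zero_of_mem_goodDomain hgd hik.symm
  rw [tval_val_add_one]
  field_simp
  ring

lemma hasPartialDerivAt_pairTerm_last_of_ne_zero (hi : (i : ℕ) ≠ 0) (hk : (k : ℕ) ≠ 0)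
    (hik : i ≠ k) :
    HasPartialDerivAt k
      (fun s => ((A (i + 1) s * A (N + 2) s).trace - θ (i + 1) * θ (N + 2)) /
        (s i - tval s (N + 2)))
      (-traceComm (A (i + 1) t) (A (N + 2) t) (A (k + 1) t) / ((t i - t k) * t k) -
        traceComm (A (i + 1) t) (A 1 t) (A (k + 1) t) / (t k ^ 2 * t i)) t := by
  have hAi := hsol.hasMatrixPartialDerivAt_mid_of_ne_zero hU ht hk (j := i + 1)
    (by simp; omega) (by simpa [Fin.val_eq_val] using hik)
  have hAl := hsol.hasMatrixPartialDerivAt_last_of_ne_zero hU ht hk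
  have hti := apply_ne_zero_of_mem_goodDomain hgd i
  simp only [tval_N_add_two, sub_zero]
  refine (((hAi.trace_mul_of_left_comm hAl).sub (hasPartialDerivAt_const _)).div
    (hasPartialDerivAt_apply_of_ne hik) hti).congr_deriv ?_
  have htk := apply_ne_zero_of_mem_goodDomain hgd k
  have htik := sub_ne_zero_of_mem_goodDomain hgd hik
  have htki := sub_ne_zero_of_mem_goodDomain hgd hik.symm
  simp only [Matrix.mul_add, Matrix.mul_smul, Matrix.trace_add, Matrix.trace_smul, trace_mul_mComm,
    traceComm_swap _ (A (k + 1) t), tval_val_add_one, smul_eq_mul]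
  field_simp
  ring

lemma hasPartialDerivAt_pairTerm_self_of_ne_zero (hi : (i : ℕ) ≠ 0) (hk : (k : ℕ) ≠ 0)
    (hik : i ≠ k) :
    HasPartialDerivAt k
      (fun s => ((A (i + 1) s * A (k + 1) s).trace - θ (i + 1) * θ (k + 1)) /
        (s i - tval s (k + 1)))
      ((∑ l ∈ (Icc 2 (N + 2)).erase (k + 1),
          traceComm (A (i + 1) t) (A l t) (A (k + 1) t) / (t k - tval t l) +
          traceComm (A (i + 1) t) (A 1 t) (A (k + 1) t) / t k ^ 2) / (t i - t k) +
        ((A (i + 1) t * A (k + 1) t).trace - θ (i + 1) * θ (k + 1)) / (t i - t k) ^ 2) t := by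
  have hAi := hsol.hasMatrixPartialDerivAt_mid_of_ne_zero hU ht hk (j := i + 1)
    (by simp; omega) (by simpa [Fin.val_eq_val] using hik)
  have hAk := hsol.hasMatrixPartialDerivAt_self_of_ne_zero hU ht hk
  have hik' := sub_ne_zero_of_mem_goodDomain hgd hik
  simp only [tval_val_add_one]
  refine (((hAi.trace_mul_of_left_comm hAk).sub (hasPartialDerivAt_const _)).div
    ((hasPartialDerivAt_apply_of_ne hik).sub hasPartialDerivAt_apply_self) hik').congr_deriv ?_
  simp only [traceComm_self_right, Matrix.mul_add, Matrix.mul_sum, Matrix.mul_smul,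
    Matrix.trace_add, Matrix.trace_sum, Matrix.trace_smul, trace_mul_mComm, smul_eq_mul,
    div_eq_inv_mul]
  field_simp
  ring

lemma hasPartialDerivAt_degSchH_of_ne_zero (hN : 0 < N) (hi : (i : ℕ) ≠ 0)
    (hk : (k : ℕ) ≠ 0) (hik : i ≠ k) :
    HasPartialDerivAt k (degSchH hN A θ i)
      (((A (i + 1) t * A (k + 1) t).trace - θ (i + 1) * θ (k + 1)) / (t i - t k) ^ 2) t := by
  have hik' : (i : ℕ) ≠ k := by simpa [Fin.val_eq_val] using hik
  have hi' := i.isLt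
  have hk' := k.isLt
  set S := ((Icc 2 (N + 1)).erase (i + 1)).erase (k + 1)
  have hNS : N + 2 ∉ S := by simp [S]
  have hkS : (k : ℕ) + 1 ∉ insert (N + 2) S := by simp [S]; omega
  have hiS : (i : ℕ) + 1 ∉ insert (N + 2) S := by simp [S]; omega
  have hsplit_i : (Icc 2 (N + 2)).erase (i + 1) = insert ((k : ℕ) + 1) (insert (N + 2) S) := by
    ext j; simp only [S, mem_erase, mem_insert, mem_Icc]; omega
  have hsplit_k : (Icc 2 (N + 2)).erase (k + 1) = insert ((i : ℕ) + 1) (insert (N + 2) S) := by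
    ext j; simp only [S, mem_erase, mem_insert, mem_Icc]; omega
  have hmid : ∀ j ∈ S, HasPartialDerivAt k
      (fun s => ((A (i + 1) s * A j s).trace - θ (i + 1) * θ j) / (s i - tval s j))
      (-traceComm (A (i + 1) t) (A j t) (A (k + 1) t) / ((t i - t k) * (t k - tval t j))) t :=
    fun j hj => by
      simp only [S, mem_erase] at hj
      exact hasPartialDerivAt_pairTerm_of_ne_zero hsol hU ht hgd hi hk hik hj.2.2 hj.2.1 hj.1
  unfold degSchH
  simp only [if_neg hi, hsplit_i, sum_insert hkS, sum_insert hNS]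
  refine ((hasPartialDerivAt_firstTerm_of_ne_zero hsol hU ht hgd hN hi hk hik).add
    ((hasPartialDerivAt_pairTerm_self_of_ne_zero hsol hU ht hgd hi hk hik).add
      ((hasPartialDerivAt_pairTerm_last_of_ne_zero hsol hU ht hgd hi hk hik).add
        (.sum S hmid)))).congr_deriv ?_
  have hcancel : ∑ j ∈ S, -traceComm (A (i + 1) t) (A j t) (A (k + 1) t) /
        ((t i - t k) * (t k - tval t j)) =
      -((∑ j ∈ S, traceComm (A (i + 1) t) (A j t) (A (k + 1) t) / (t k - tval t j)) /
        (t i - t k)) := by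
    rw [sum_div, ← sum_neg_distrib]
    exact sum_congr rfl fun j _ => by rw [neg_div, div_div, mul_comm (t k - _)]
  rw [hsplit_k, sum_insert hiS, sum_insert hNS, traceComm_self_left, tval_N_add_two, hcancel]
  have hti := apply_ne_zero_of_mem_goodDomain hgd i
  have htk := apply_ne_zero_of_mem_goodDomain hgd k
  have htik := sub_ne_zero_of_mem_goodDomain hgd hik
  have htki := sub_ne_zero_of_mem_goodDomain hgd hik.symm
  field_simp
  ring

lemma hasPartialDerivAt_firstTerm_along_zero (hN : 0 < N) (hi : (i : ℕ) ≠ 0) :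
    HasPartialDerivAt ⟨0, hN⟩
      (fun s => ((A (i + 1) s * A 1 s).trace - s ⟨0, hN⟩ * θ (i + 1)) / s i ^ 2)
      ((((A (i + 1) t * A 1 t).trace + traceComm (A (i + 1) t) (A (N + 2) t) (A 1 t)) /
        t ⟨0, hN⟩ - θ (i + 1)) / t i ^ 2) t := by
  have hAi := hsol.hasMatrixPartialDerivAt_mid_zero hU ht hN (j := i + 1) (by simp; omega)
  have hA1 := hsol.hasMatrixPartialDerivAt_one_zero hU ht hN
  have hi0 : i ≠ ⟨0, hN⟩ := fun h => hi (by rw [h])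
  refine (((hAi.trace_mul_of_left_comm hA1).sub (hasPartialDerivAt_apply_self.mul
    (hasPartialDerivAt_const _))).div ((hasPartialDerivAt_apply_of_ne hi0).pow 2)
    (pow_ne_zero 2 (apply_ne_zero_of_mem_goodDomain hgd i))).congr_deriv ?_
  have hti := apply_ne_zero_of_mem_goodDomain hgd i
  simp only [traceComm_self_right, Matrix.mul_smul, Matrix.mul_add, Matrix.trace_smul,
    Matrix.trace_add, trace_mul_mComm, smul_eq_mul]
  field_simp
  ring

lemma hasPartialDerivAt_pairTerm_along_zero (hN : 0 < N) (hi : (i : ℕ) ≠ 0) {j : ℕ}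
    (hj : j ∈ Icc 2 (N + 1)) (hji : j ≠ i + 1) :
    HasPartialDerivAt ⟨0, hN⟩
      (fun s => ((A (i + 1) s * A j s).trace - θ (i + 1) * θ j) / (s i - tval s j))
      (traceComm (A (i + 1) t) (A j t) (A 1 t) / (t ⟨0, hN⟩ * t i * tval t j)) t := by
  have hAi := hsol.hasMatrixPartialDerivAt_mid_zero hU ht hN (j := i + 1) (by simp; omega)
  have hAj := hsol.hasMatrixPartialDerivAt_mid_zero hU ht hN hj
  have hi0 : i ≠ ⟨0, hN⟩ := fun h => hi (by rw [h])
  have hj' : j ∈ Icc 1 (N + 2) := by simp at hj ⊢; omega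
  refine (((hAi.trace_mul_of_comm hAj).sub (hasPartialDerivAt_const _)).div
    ((hasPartialDerivAt_apply_of_ne hi0).sub
      (hasPartialDerivAt_tval_of_ne (by simp at hj ⊢; omega)))
    (sub_tval_ne_zero_of_mem_goodDomain hgd i hj' hji)).congr_deriv ?_
  have htij := sub_tval_ne_zero_of_mem_goodDomain hgd i hj' hji
  have hti := apply_ne_zero_of_mem_goodDomain hgd i
  have ht0 := apply_ne_zero_of_mem_goodDomain hgd ⟨0, hN⟩
  have htj := tval_ne_zero_of_mem_goodDomain hgd (j := j) (by simp at hj ⊢; omega)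
  rw [tval_val_add_one]
  field_simp
  ring

lemma hasPartialDerivAt_pairTerm_last_along_zero (hN : 0 < N) (hi : (i : ℕ) ≠ 0) :
    HasPartialDerivAt ⟨0, hN⟩
      (fun s => ((A (i + 1) s * A (N + 2) s).trace - θ (i + 1) * θ (N + 2)) /
        (s i - tval s (N + 2)))
      (-(traceComm (A (i + 1) t) (A (N + 2) t) (A 1 t) / t i +
          ∑ l ∈ Icc 2 (N + 1), traceComm (A (i + 1) t) (A l t) (A 1 t) / tval t l) /
        (t ⟨0, hN⟩ * t i)) t := by
  have hAi := hsol.hasMatrixPartialDerivAt_mid_zero hU ht hN (j := i + 1) (by simp; omega)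
  have hAl := hsol.hasMatrixPartialDerivAt_last_zero hU ht hN
  have hi0 : i ≠ ⟨0, hN⟩ := fun h => hi (by rw [h])
  have hti := apply_ne_zero_of_mem_goodDomain hgd i
  simp only [tval_N_add_two, sub_zero]
  refine (((hAi.trace_mul_of_left_comm hAl).sub (hasPartialDerivAt_const _)).div
    (hasPartialDerivAt_apply_of_ne hi0) hti).congr_deriv ?_
  have ht0 := apply_ne_zero_of_mem_goodDomain hgd ⟨0, hN⟩
  have hE : (A (i + 1) t *
      ∑ l ∈ Icc 2 (N + 1), (-(tval t l * t ⟨0, hN⟩)⁻¹) • mComm (A l t) (A 1 t)).trace =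
      -(∑ l ∈ Icc 2 (N + 1), traceComm (A (i + 1) t) (A l t) (A 1 t) / tval t l) / t ⟨0, hN⟩ := by
    rw [Matrix.mul_sum, Matrix.trace_sum, neg_div, sum_div, ← sum_neg_distrib]
    refine sum_congr rfl fun l _ => ?_
    rw [Matrix.mul_smul, Matrix.trace_smul, trace_mul_mComm, smul_eq_mul]
    ring
  rw [hE, tval_val_add_one]
  field_simp
  ring

lemma hasPartialDerivAt_degSchH_along_zero (hN : 0 < N) (hi : (i : ℕ) ≠ 0) :
    HasPartialDerivAt ⟨0, hN⟩ (degSchH hN A θ i)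
      (((A (i + 1) t * A 1 t).trace - t ⟨0, hN⟩ * θ (i + 1)) / (t ⟨0, hN⟩ * t i ^ 2)) t := by
  have hi' := i.isLt
  set S := (Icc 2 (N + 1)).erase (i + 1)
  have hNS : N + 2 ∉ S := by simp [S]
  have hiS : (i : ℕ) + 1 ∉ S := by simp [S]
  have hsplit : (Icc 2 (N + 2)).erase (i + 1) = insert (N + 2) S := by
    ext j; simp only [S, mem_erase, mem_insert, mem_Icc]; omega
  have hsplit' : Icc 2 (N + 1) = insert ((i : ℕ) + 1) S := by
    rw [insert_erase]; simp; omega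
  have hmid : ∀ j ∈ S, HasPartialDerivAt ⟨0, hN⟩
      (fun s => ((A (i + 1) s * A j s).trace - θ (i + 1) * θ j) / (s i - tval s j))
      (traceComm (A (i + 1) t) (A j t) (A 1 t) / (t ⟨0, hN⟩ * t i * tval t j)) t :=
    fun j hj => by
      simp only [S, mem_erase] at hj
      exact hasPartialDerivAt_pairTerm_along_zero hsol hU ht hgd hN hi hj.2 hj.1
  unfold degSchH
  simp only [if_neg hi, hsplit, sum_insert hNS]
  refine ((hasPartialDerivAt_firstTerm_along_zero hsol hU ht hgd hN hi).add
    ((hasPartialDerivAt_pairTerm_last_along_zero hsol hU ht hgd hN hi).add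
      (.sum S hmid))).congr_deriv ?_
  have hcancel : ∑ j ∈ S, traceComm (A (i + 1) t) (A j t) (A 1 t) / (t ⟨0, hN⟩ * t i * tval t j) =
      (∑ j ∈ S, traceComm (A (i + 1) t) (A j t) (A 1 t) / tval t j) / (t ⟨0, hN⟩ * t i) := by
    rw [sum_div]
    exact sum_congr rfl fun j _ => by rw [div_div, mul_comm (tval t j)]
  rw [hsplit', sum_insert hiS, traceComm_self_left, hcancel]
  have hti := apply_ne_zero_of_mem_goodDomain hgd i
  have ht0 := apply_ne_zero_of_mem_goodDomain hgd ⟨0, hN⟩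
  field_simp
  ring

lemma hasPartialDerivAt_detTerm (hN : 0 < N) (hk : (k : ℕ) ≠ 0) :
    HasPartialDerivAt k (fun s => -(A (N + 2) s).det / s ⟨0, hN⟩)
      (traceComm (A 1 t) (A (N + 2) t) (A (k + 1) t) / (t ⟨0, hN⟩ * t k ^ 2)) t := by
  have h0k : (⟨0, hN⟩ : Fin N) ≠ k := fun h => hk (by rw [← h])
  refine ((hsol.hasMatrixPartialDerivAt_last_of_ne_zero hU ht hk).det.neg.div
    (hasPartialDerivAt_apply_of_ne h0k) (apply_ne_zero_of_mem_goodDomain hgd _)).congr_deriv ?_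
  have ht0 := apply_ne_zero_of_mem_goodDomain hgd ⟨0, hN⟩
  have htk := apply_ne_zero_of_mem_goodDomain hgd k
  simp only [Matrix.trace_add, Matrix.trace_smul, trace_mComm, Matrix.mul_add, Matrix.mul_smul,
    trace_mul_mComm, traceComm_self_right, smul_eq_mul, traceComm_cycle (A (N + 2) t),
    traceComm_cycle (A (k + 1) t)]
  field_simp
  ring

lemma hasPartialDerivAt_oneTerm (hN : 0 < N) (hk : (k : ℕ) ≠ 0) {j : ℕ} (hj : j ∈ Icc 2 (N + 1))
    (hjk : j ≠ k + 1) :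
    HasPartialDerivAt k
      (fun s => ((A 1 s * A j s).trace - s ⟨0, hN⟩ * θ j) / (s ⟨0, hN⟩ * tval s j))
      (-traceComm (A 1 t) (A j t) (A (k + 1) t) / (t ⟨0, hN⟩ * t k * (t k - tval t j))) t := by
  have h0k : (⟨0, hN⟩ : Fin N) ≠ k := fun h => hk (by rw [← h])
  have hA1 := hsol.hasMatrixPartialDerivAt_one_of_ne_zero hU ht hk
  have hAj := hsol.hasMatrixPartialDerivAt_mid_of_ne_zero hU ht hk hj hjk
  have htj := tval_ne_zero_of_mem_goodDomain hgd (j := j) (by simp at hj ⊢; omega)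
  have ht0 := apply_ne_zero_of_mem_goodDomain hgd ⟨0, hN⟩
  refine (((hA1.trace_mul_of_comm hAj).sub ((hasPartialDerivAt_apply_of_ne h0k).mul
    (hasPartialDerivAt_const _))).div ((hasPartialDerivAt_apply_of_ne h0k).mul
    (hasPartialDerivAt_tval_of_ne hjk)) (mul_ne_zero ht0 htj)).congr_deriv ?_
  have htk := apply_ne_zero_of_mem_goodDomain hgd k
  have htkj := sub_tval_ne_zero_of_mem_goodDomain hgd k (j := j) (by simp at hj ⊢; omega) hjk
  field_simp
  ring

lemma hasPartialDerivAt_oneTerm_self (hN : 0 < N) (hk : (k : ℕ) ≠ 0) :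
    HasPartialDerivAt k
      (fun s => ((A 1 s * A (k + 1) s).trace - s ⟨0, hN⟩ * θ (k + 1)) /
        (s ⟨0, hN⟩ * tval s (k + 1)))
      ((∑ l ∈ (Icc 2 (N + 2)).erase (k + 1),
          traceComm (A 1 t) (A l t) (A (k + 1) t) / (t k - tval t l)) / (t ⟨0, hN⟩ * t k) -
        ((A 1 t * A (k + 1) t).trace - t ⟨0, hN⟩ * θ (k + 1)) / (t ⟨0, hN⟩ * t k ^ 2)) t := by
  have h0k : (⟨0, hN⟩ : Fin N) ≠ k := fun h => hk (by rw [← h])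
  have hA1 := hsol.hasMatrixPartialDerivAt_one_of_ne_zero hU ht hk
  have hAk := hsol.hasMatrixPartialDerivAt_self_of_ne_zero hU ht hk
  have ht0 := apply_ne_zero_of_mem_goodDomain hgd ⟨0, hN⟩
  have htk := apply_ne_zero_of_mem_goodDomain hgd k
  simp only [tval_val_add_one]
  refine (((hA1.trace_mul_of_left_comm hAk).sub ((hasPartialDerivAt_apply_of_ne h0k).mul
    (hasPartialDerivAt_const _))).div ((hasPartialDerivAt_apply_of_ne h0k).mul
    hasPartialDerivAt_apply_self) (mul_ne_zero ht0 htk)).congr_deriv ?_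
  simp only [traceComm_self_right, Matrix.mul_add, Matrix.mul_sum, Matrix.mul_smul,
    Matrix.trace_add, Matrix.trace_sum, Matrix.trace_smul, trace_mul_mComm, traceComm_self_left,
    smul_eq_mul, div_eq_inv_mul]
  field_simp
  ring

lemma hasPartialDerivAt_degSchH_zero (hN : 0 < N) (hk : (k : ℕ) ≠ 0) :
    HasPartialDerivAt k (degSchH hN A θ ⟨0, hN⟩)
      (((A 1 t * A (k + 1) t).trace - t ⟨0, hN⟩ * θ (k + 1)) / (t ⟨0, hN⟩ * t k ^ 2)) t := by
  have hk' := k.isLt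
  set S := (Icc 2 (N + 1)).erase (k + 1)
  have hNS : N + 2 ∉ S := by simp [S]
  have hkS : (k : ℕ) + 1 ∉ S := by simp [S]
  have hsplit : Icc 2 (N + 1) = insert ((k : ℕ) + 1) S := by
    rw [insert_erase]; simp; omega
  have hsplit' : (Icc 2 (N + 2)).erase (k + 1) = insert (N + 2) S := by
    ext j; simp only [S, mem_erase, mem_insert, mem_Icc]; omega
  have hmid : ∀ j ∈ S, HasPartialDerivAt k
      (fun s => ((A 1 s * A j s).trace - s ⟨0, hN⟩ * θ j) / (s ⟨0, hN⟩ * tval s j))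
      (-traceComm (A 1 t) (A j t) (A (k + 1) t) / (t ⟨0, hN⟩ * t k * (t k - tval t j))) t :=
    fun j hj => by
      simp only [S, mem_erase] at hj
      exact hasPartialDerivAt_oneTerm hsol hU ht hgd hN hk hj.2 hj.1
  unfold degSchH
  simp only [if_pos, hsplit, sum_insert hkS]
  refine ((hasPartialDerivAt_detTerm hsol hU ht hgd hN hk).sub
    ((hasPartialDerivAt_oneTerm_self hsol hU ht hgd hN hk).add (.sum S hmid))).congr_deriv ?_
  have hcancel : ∑ j ∈ S, -traceComm (A 1 t) (A j t) (A (k + 1) t) /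
        (t ⟨0, hN⟩ * t k * (t k - tval t j)) =
      -((∑ j ∈ S, traceComm (A 1 t) (A j t) (A (k + 1) t) / (t k - tval t j)) /
        (t ⟨0, hN⟩ * t k)) := by
    rw [sum_div, ← sum_neg_distrib]
    exact sum_congr rfl fun j _ => by rw [neg_div, div_div, mul_comm (t k - _)]
  rw [hsplit', sum_insert hNS, tval_N_add_two, hcancel]
  have htk := apply_ne_zero_of_mem_goodDomain hgd k
  have ht0 := apply_ne_zero_of_mem_goodDomain hgd ⟨0, hN⟩
  field_simp
  ring

end Hamiltonians

theorem degSch_tau_form_closed_general (N : ℕ) (hN : 0 < N) (U : Set (Fin N → ℂ))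
    (hUopen : IsOpen U) (hUsub : U ⊆ goodDomain N)
    (A : ℕ → (Fin N → ℂ) → Matrix (Fin 2) (Fin 2) ℂ) (θ : ℕ → ℂ)
    (hsol : SolvesDegSch U A) :
    ∀ t ∈ U, ∀ i k : Fin N,
      fderiv ℂ (degSchH hN A θ i) t (Pi.single k 1) =
        fderiv ℂ (degSchH hN A θ k) t (Pi.single i 1) := by
  intro t ht i k
  have hgd := hUsub ht
  have zero_comm {k : Fin N} (hk : (k : ℕ) ≠ 0) :
      fderiv ℂ (degSchH hN A θ ⟨0, hN⟩) t (Pi.single k 1) =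
        fderiv ℂ (degSchH hN A θ k) t (Pi.single ⟨0, hN⟩ 1) := by
    rw [(hasPartialDerivAt_degSchH_zero hsol hUopen ht hgd hN hk).2,
      (hasPartialDerivAt_degSchH_along_zero hsol hUopen ht hgd hN hk).2, Matrix.trace_mul_comm]
  rcases eq_or_ne i k with rfl | hik
  · rfl
  rcases eq_or_ne (i : ℕ) 0 with hi | hi <;> rcases eq_or_ne (k : ℕ) 0 with hk | hk
  · exact absurd (Fin.ext (hi.trans hk.symm)) hik
  · obtain rfl : i = ⟨0, hN⟩ := Fin.ext hi
    exact zero_comm hk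
  · obtain rfl : k = ⟨0, hN⟩ := Fin.ext hk
    exact (zero_comm hi).symm
  · rw [(hasPartialDerivAt_degSchH_of_ne_zero hsol hUopen ht hgd hN hi hk hik).2,
      (hasPartialDerivAt_degSchH_of_ne_zero hsol hUopen ht hgd hN hk hi hik.symm).2,
      Matrix.trace_mul_comm, mul_comm (θ (k + 1)), ← neg_sub (t i), neg_sq]

/-- **Closedness of the τ-form for the degenerate Schlesinger system** (Proposition 2.1):
if `A_1, …, A_{N+2}` solve `S(1,…,1,2;N)` on a connected open `U` contained in the good
domain, with `tr A_1 = t_1`, `tr A_j = θ_j` constant for `j = 2, …, N+2`, `det A_j = 0`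
for `j = 1, …, N+1`, `tr(A_1 A_{N+2}) = t_1 θ_{N+2}`, and
`−Σ_{j=2}^{N+2} A_j = diag(ρ, ρ + θ_{N+3})` constant, then the 1-form
`ω_0 = Σ_i H_i dt_i` is closed: `∂H_i/∂t_k = ∂H_k/∂t_i` on `U`. -/
theorem degSch_tau_form_closed (N : ℕ) (hN : 0 < N) (U : Set (Fin N → ℂ))
    (hUopen : IsOpen U) (hUconn : IsConnected U) (hUsub : U ⊆ goodDomain N)
    (A : ℕ → (Fin N → ℂ) → Matrix (Fin 2) (Fin 2) ℂ) (θ : ℕ → ℂ) (ρ : ℂ)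
    (hsol : SolvesDegSch U A)
    (htr1 : ∀ t ∈ U, (A 1 t).trace = t ⟨0, hN⟩)
    (htr : ∀ j ∈ Icc 2 (N + 2), ∀ t ∈ U, (A j t).trace = θ j)
    (hdet : ∀ j ∈ Icc 1 (N + 1), ∀ t ∈ U, (A j t).det = 0)
    (hpair : ∀ t ∈ U, (A 1 t * A (N + 2) t).trace = t ⟨0, hN⟩ * θ (N + 2))
    (hinf : ∀ t ∈ U, (-∑ j ∈ Icc 2 (N + 2), A j t) = !![ρ, 0; 0, ρ + θ (N + 3)]) :
    ∀ t ∈ U, ∀ i k : Fin N,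
      fderiv ℂ (degSchH hN A θ i) t (Pi.single k 1) =
        fderiv ℂ (degSchH hN A θ k) t (Pi.single i 1) :=
  degSch_tau_form_closed_general N hN U hUopen hUsub A θ hsol
end

section
/- Closedness of the τ-form for the classical Schlesinger system: let A_1, …, A_{N+2} : U → M_2(ℂ) be holomorphic maps solving the Schlesinger system S(1,…,1;N) on U, and suppose that det A_j = 0 and tr A_j = θ_j is constant for j = 1, …, N+2, and that −Σ_{j=1}^{N+2} A_j(t) equals the constant diagonal matrix diag(ρ, ρ + θ_{N+3}) for constants ρ, θ_{N+3} ∈ ℂ. Define holomorphic functions H_1, …, H_N on U by H_i = Σ_{j=1, j≠i}^{N+2} (tr(A_i A_j) − θ_i θ_j)/(t_i − t_j) (where t_{N+1} = 1 and t_{N+2} = 0). Then ∂H_i/∂t_j = ∂H_j/∂t_i on U for all 1 ≤ i, j ≤ N. -/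
open Finset

/-- `A 1, …, A (N+2) : U → M₂(ℂ)` solve the classical Schlesinger system `S(1,…,1;N)`:
each entry is holomorphic on `U` and the partial differential equations obtained by
equating coefficients of `dt_1, …, dt_N` in
`dA_j = Σ_{i=1,i≠j}^{N+2} [A_i, A_j] d log(t_j − t_i)` (`j = 1, …, N+2`)
hold on `U`, with `t_{N+1} = 1`, `t_{N+2} = 0` held constant.  The coordinate
`k : Fin N` represents the variable `t_{k+1}`. -/
def SolvesSch {N : ℕ} (U : Set (Fin N → ℂ))
    (A : ℕ → (Fin N → ℂ) → Matrix (Fin 2) (Fin 2) ℂ) : Prop :=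
  (∀ j ∈ Icc 1 (N + 2), ∀ a b : Fin 2, DifferentiableOn ℂ (fun t => A j t a b) U) ∧
  ∀ t ∈ U, ∀ k : Fin N, ∀ j ∈ Icc 1 (N + 2),
    pder k (A j) t =
      if (k : ℕ) + 1 = j then
        ∑ i ∈ (Icc 1 (N + 2)).erase j,
          (tval t j - tval t i)⁻¹ • mComm (A i t) (A j t)
      else (-(tval t j - t k)⁻¹) • mComm (A ((k : ℕ) + 1) t) (A j t)

/-- The Hamiltonians `H_i = Σ_{j=1,j≠i}^{N+2} (tr(A_i A_j) − θ_i θ_j)/(t_i − t_j)`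
(`i = 1, …, N`; the coordinate `i : Fin N` represents the classical index `i+1`). -/
noncomputable def schH {N : ℕ}
    (A : ℕ → (Fin N → ℂ) → Matrix (Fin 2) (Fin 2) ℂ) (θ : ℕ → ℂ)
    (i : Fin N) (t : Fin N → ℂ) : ℂ :=
  ∑ j ∈ (Icc 1 (N + 2)).erase ((i : ℕ) + 1),
    ((A ((i : ℕ) + 1) t * A j t).trace - θ ((i : ℕ) + 1) * θ j) / (t i - tval t j)

/-!
For `i ≠ k` the Schlesinger equations give
`∂H_i/∂t_k = (tr(A_i A_k) − θ_i θ_k)/(t_i − t_k)²`, which is symmetric in `i` and `k`. Differentiating `H_i` term by term, only the denominator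
`t_i − t_k` contributes a term free of derivatives of the `A_j`. By cyclicity of the trace every
other term is a multiple of some `tr([A_k, A_i] A_j)`, and for each `j` these multiples cancel by
a partial fraction identity.
-/

namespace Matrix

variable {n K : Type*} [Fintype n]

theorem trace_mul_eq_sum_sum [NonUnitalNonAssocSemiring K] (X Y : Matrix n n K) :
    (X * Y).trace = ∑ a, ∑ b, X a b * Y b a := by
  simp only [trace, diag, mul_apply]

theorem trace_lie_mul_cycle [CommRing K] (X Y Z : Matrix n n K) :
    (⁅X, Y⁆ * Z).trace = (⁅Y, Z⁆ * X).trace := by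
  simp only [Ring.lie_def, sub_mul, trace_sub, mul_assoc]
  rw [trace_mul_comm X, trace_mul_comm Z (Y * X)]
  simp only [mul_assoc]

theorem trace_lie_mul_self [CommRing K] (X Y : Matrix n n K) : (⁅X, Y⁆ * X).trace = 0 := by
  simp only [Ring.lie_def, sub_mul, trace_sub, mul_assoc]
  rw [trace_mul_comm X, mul_assoc, sub_self]

/-- `P j` stands for `∂X j/∂τ k` as prescribed by the Schlesinger equations. -/
theorem sum_trace_schlesinger_div_eq_zero [Field K] {ι : Type*} [DecidableEq ι] {S : Finset ι}
    {τ : ι → K} (hτ : Set.InjOn τ S) (X P : ι → Matrix n n K) {i k : ι} (hi : i ∈ S)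
    (hk : k ∈ S) (hik : i ≠ k)
    (hP : ∀ j ∈ S, j ≠ k → P j = -(τ j - τ k)⁻¹ • ⁅X k, X j⁆)
    (hPk : P k = ∑ r ∈ S.erase k, (τ k - τ r)⁻¹ • ⁅X r, X k⁆) :
    ∑ j ∈ S.erase i, ((P i * X j).trace + (X i * P j).trace) / (τ i - τ j) = 0 := by
  set c : ι → K := fun j => (⁅X k, X i⁆ * X j).trace
  have hsub : ∀ {a b}, a ∈ S → b ∈ S → a ≠ b → τ a - τ b ≠ 0 := fun ha hb hab =>
    sub_ne_zero.2 fun h => hab (hτ ha hb h)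
  have hPi := hP i hi hik
  have hk_term : ((P i * X k).trace + (X i * P k).trace) / (τ i - τ k) =
      ∑ j ∈ (S.erase i).erase k, c j * (τ k - τ j)⁻¹ / (τ i - τ k) := by
    have hiS : i ∈ S.erase k := mem_erase.2 ⟨hik, hi⟩
    rw [hPi, hPk, smul_mul, trace_smul, trace_lie_mul_self, smul_zero, zero_add, mul_sum,
      trace_sum, ← add_sum_erase _ _ hiS, Matrix.mul_smul, trace_smul, trace_mul_comm (X i),
      trace_lie_mul_self, smul_zero, zero_add, sum_div, erase_right_comm]
    refine sum_congr rfl fun j _ => ?_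
    rw [Matrix.mul_smul, trace_smul, trace_mul_comm, trace_lie_mul_cycle, smul_eq_mul, mul_comm]
  have hj_term : ∀ j ∈ (S.erase i).erase k,
      ((P i * X j).trace + (X i * P j).trace) / (τ i - τ j) =
        c j * ((τ j - τ k)⁻¹ - (τ i - τ k)⁻¹) / (τ i - τ j) := by
    intro j hj
    obtain ⟨hjk, hji, hjS⟩ : j ≠ k ∧ j ≠ i ∧ j ∈ S := by simpa using hj
    have hskew : ⁅X i, X k⁆ = -⁅X k, X i⁆ := by simp only [Ring.lie_def, neg_sub]
    rw [hPi, hP j hjS hjk, smul_mul, trace_smul, Matrix.mul_smul, trace_smul, trace_mul_comm (X i),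
      trace_lie_mul_cycle (X k) (X j), trace_lie_mul_cycle (X j) (X i), hskew,
      neg_mul, trace_neg]
    simp only [c, smul_eq_mul]
    ring
  rw [← add_sum_erase _ _ (mem_erase.2 ⟨hik.symm, hk⟩), hk_term, sum_congr rfl hj_term,
    ← sum_add_distrib]
  refine sum_eq_zero fun j hj => ?_
  obtain ⟨hjk, hji, hjS⟩ : j ≠ k ∧ j ≠ i ∧ j ∈ S := by simpa using hj
  have hjk' := hsub hjS hk hjk
  have hkj' := hsub hk hjS (Ne.symm hjk)
  have hik' := hsub hi hk hik
  have hij' := hsub hi hjS hji.symm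
  field_simp
  ring

end Matrix

section Calculus

variable {𝕜 E : Type*} [NontriviallyNormedField 𝕜] [NormedAddCommGroup E] [NormedSpace 𝕜 E]

theorem fderiv_fun_div_apply {f g : E → 𝕜} {x : E} (hf : DifferentiableAt 𝕜 f x)
    (hg : DifferentiableAt 𝕜 g x) (hx : g x ≠ 0) (v : E) :
    fderiv 𝕜 (fun s => f s / g s) x v =
      fderiv 𝕜 f x v / g x - f x * fderiv 𝕜 g x v / g x ^ 2 := by
  have hinv : HasFDerivAt (fun s => (g s)⁻¹) ((-(g x ^ 2)⁻¹) • fderiv 𝕜 g x) x :=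
    (hasDerivAt_inv hx).comp_hasFDerivAt x hg.hasFDerivAt
  simp only [div_eq_mul_inv]
  rw [(hf.hasFDerivAt.fun_mul hinv).fderiv]
  simp only [add_apply, smul_apply, smul_eq_mul]
  ring

variable {n : Type*} [Fintype n] {P Q : E → Matrix n n 𝕜} {x : E}

theorem differentiableAt_trace_mul (hP : ∀ a b, DifferentiableAt 𝕜 (fun s => P s a b) x)
    (hQ : ∀ a b, DifferentiableAt 𝕜 (fun s => Q s a b) x) :
    DifferentiableAt 𝕜 (fun s => (P s * Q s).trace) x := by
  simp only [Matrix.trace_mul_eq_sum_sum]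
  fun_prop

theorem fderiv_trace_mul_apply (hP : ∀ a b, DifferentiableAt 𝕜 (fun s => P s a b) x)
    (hQ : ∀ a b, DifferentiableAt 𝕜 (fun s => Q s a b) x) (v : E) :
    fderiv 𝕜 (fun s => (P s * Q s).trace) x v =
      (Matrix.of (fun a b => fderiv 𝕜 (fun s => P s a b) x v) * Q x).trace +
        (P x * Matrix.of fun a b => fderiv 𝕜 (fun s => Q s a b) x v).trace := by
  simp only [Matrix.trace_mul_eq_sum_sum]
  rw [fderiv_fun_sum fun a _ => by fun_prop]
  simp only [_root_.sum_apply, ← sum_add_distrib]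
  refine sum_congr rfl fun a _ => ?_
  rw [fderiv_fun_sum fun b _ => (hP a b).fun_mul (hQ b a), _root_.sum_apply]
  refine sum_congr rfl fun b _ => ?_
  rw [fderiv_fun_mul (hP a b) (hQ b a)]
  simp only [add_apply, smul_apply, smul_eq_mul, Matrix.of_apply]
  ring

end Calculus

section Coordinates

variable {N : ℕ}

theorem tval_coe_add_one (t : Fin N → ℂ) (i : Fin N) : tval t (i + 1) = t i := by
  rw [tval, dif_pos ⟨by omega, i.isLt⟩]
  rfl

theorem tval_add_one (t : Fin N → ℂ) : tval t (N + 1) = 1 := by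
  simp [tval]

theorem tval_add_two (t : Fin N → ℂ) : tval t (N + 2) = 0 := by
  simp [tval]

theorem differentiableAt_tval (j : ℕ) (t : Fin N → ℂ) :
    DifferentiableAt ℂ (fun s : Fin N → ℂ => tval s j) t := by
  unfold tval
  split_ifs <;> fun_prop

theorem fderiv_tval_apply_single (j : ℕ) (t : Fin N → ℂ) (k : Fin N) :
    fderiv ℂ (fun s : Fin N → ℂ => tval s j) t (Pi.single k 1) =
      if j = k + 1 then 1 else 0 := by
  by_cases h : 1 ≤ j ∧ j ≤ N
  · simp only [tval, dif_pos h]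
    rw [(hasFDerivAt_apply _ t).fderiv, ContinuousLinearMap.proj_apply, Pi.single_apply]
    simp only [Fin.ext_iff]
    exact if_congr (by omega) rfl rfl
  · have hj : j ≠ k + 1 := by omega
    simp only [tval, dif_neg h, if_neg hj]
    split_ifs <;> simp

theorem coe_add_one_mem_Icc (i : Fin N) : (i : ℕ) + 1 ∈ Icc 1 (N + 2) := by
  simp only [mem_Icc]
  omega

theorem mem_Icc_one_add_two_cases {j : ℕ} (hj : j ∈ Icc 1 (N + 2)) :
    (∃ i : Fin N, j = i + 1) ∨ j = N + 1 ∨ j = N + 2 := by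
  rw [mem_Icc] at hj
  by_cases h : j ≤ N
  · exact Or.inl ⟨⟨j - 1, by omega⟩, by simp; omega⟩
  · omega

theorem injOn_tval {t : Fin N → ℂ} (ht : t ∈ goodDomain N) :
    Set.InjOn (tval t) (Icc 1 (N + 2)) := by
  obtain ⟨hsing, hinj⟩ := ht
  intro a ha b hb hab
  rcases mem_Icc_one_add_two_cases ha with ⟨i, rfl⟩ | rfl | rfl <;>
    rcases mem_Icc_one_add_two_cases hb with ⟨k, rfl⟩ | rfl | rfl <;>
    simp only [tval_coe_add_one, tval_add_one, tval_add_two] at hab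
  · rw [(by_contra fun hik => hinj i k (mt (congrArg Fin.val) hik) hab : (i : ℕ) = k)]
  all_goals first
    | rfl
    | exact absurd hab one_ne_zero
    | exact absurd hab zero_ne_one
    | exact absurd hab (hsing _).1
    | exact absurd hab (hsing _).2
    | exact absurd hab.symm (hsing _).1
    | exact absurd hab.symm (hsing _).2

end Coordinates

section Hamiltonians

variable {N : ℕ} {A : ℕ → (Fin N → ℂ) → Matrix (Fin 2) (Fin 2) ℂ} {t : Fin N → ℂ}

theorem fderiv_schH_apply_single_of_ne (θ : ℕ → ℂ) {i k : Fin N} (hik : i ≠ k)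
    (hA : ∀ j ∈ Icc 1 (N + 2), ∀ a b, DifferentiableAt ℂ (fun s => A j s a b) t)
    (ht : Set.InjOn (tval t) (Icc 1 (N + 2))) :
    fderiv ℂ (schH A θ i) t (Pi.single k 1) =
      ((A (i + 1) t * A (k + 1) t).trace - θ (i + 1) * θ (k + 1)) / (t i - t k) ^ 2 +
        ∑ j ∈ (Icc 1 (N + 2)).erase (i + 1),
          ((pder k (A (i + 1)) t * A j t).trace + (A (i + 1) t * pder k (A j) t).trace) /
            (t i - tval t j) := by
  have hiS := coe_add_one_mem_Icc i
  have hkS := coe_add_one_mem_Icc k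
  have hki : (k : ℕ) + 1 ≠ i + 1 := fun h => hik (Fin.ext (by omega)).symm
  have hden : ∀ j ∈ (Icc 1 (N + 2)).erase (i + 1), t i - tval t j ≠ 0 := fun j hj =>
    sub_ne_zero.2 fun h => ne_of_mem_erase hj
      (ht (mem_of_mem_erase hj) hiS (by rw [← h, tval_coe_add_one]))
  have hnum : ∀ j ∈ Icc 1 (N + 2),
      DifferentiableAt ℂ (fun s => (A (i + 1) s * A j s).trace - θ (i + 1) * θ j) t :=
    fun j hj => (differentiableAt_trace_mul (hA _ hiS) (hA j hj)).sub_const _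
  have hdenD : ∀ j, DifferentiableAt ℂ (fun s : Fin N → ℂ => s i - tval s j) t := fun j =>
    (hasFDerivAt_apply i t).differentiableAt.sub (differentiableAt_tval j t)
  have hterm : ∀ j ∈ (Icc 1 (N + 2)).erase (i + 1),
      fderiv ℂ (fun s => ((A (i + 1) s * A j s).trace - θ (i + 1) * θ j) / (s i - tval s j)) t
          (Pi.single k 1) =
        ((pder k (A (i + 1)) t * A j t).trace + (A (i + 1) t * pder k (A j) t).trace) /
            (t i - tval t j) +
          if j = k + 1 then
            ((A (i + 1) t * A j t).trace - θ (i + 1) * θ j) / (t i - tval t j) ^ 2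
          else 0 := by
    intro j hj
    have hcoord : (fun s : Fin N → ℂ => s i - tval s j) = fun s => tval s (i + 1) - tval s j :=
      funext fun s => by rw [tval_coe_add_one]
    rw [fderiv_fun_div_apply (hnum j (mem_of_mem_erase hj)) (hdenD j) (hden j hj), fderiv_sub_const,
      fderiv_trace_mul_apply (hA _ hiS) (hA j (mem_of_mem_erase hj)), hcoord,
      fderiv_fun_sub (differentiableAt_tval _ t) (differentiableAt_tval j t), sub_apply,
      fderiv_tval_apply_single, fderiv_tval_apply_single, if_neg (Ne.symm hki)]
    split_ifs <;> simp only [pder] <;> ring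
  have hdiff : ∀ j ∈ (Icc 1 (N + 2)).erase (i + 1), DifferentiableAt ℂ
      (fun s => ((A (i + 1) s * A j s).trace - θ (i + 1) * θ j) / (s i - tval s j)) t :=
    fun j hj => by
      simpa only [div_eq_mul_inv] using
        (hnum j (mem_of_mem_erase hj)).fun_mul ((hdenD j).fun_inv (hden j hj))
  rw [show schH A θ i = fun s => ∑ j ∈ (Icc 1 (N + 2)).erase (i + 1),
      ((A (i + 1) s * A j s).trace - θ (i + 1) * θ j) / (s i - tval s j) from rfl,
    fderiv_fun_sum hdiff, _root_.sum_apply, sum_congr rfl hterm, sum_add_distrib,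
    sum_ite_eq' _ _ _, if_pos (mem_erase.2 ⟨hki, hkS⟩), tval_coe_add_one, add_comm]

theorem SolvesSch.fderiv_schH_apply_single_of_ne {U : Set (Fin N → ℂ)} (hsol : SolvesSch U A)
    (hU : IsOpen U) (hUsub : U ⊆ goodDomain N) (θ : ℕ → ℂ) (ht : t ∈ U) {i k : Fin N}
    (hik : i ≠ k) :
    fderiv ℂ (schH A θ i) t (Pi.single k 1) =
      ((A (i + 1) t * A (k + 1) t).trace - θ (i + 1) * θ (k + 1)) / (t i - t k) ^ 2 := by
  have hτ := injOn_tval (hUsub ht)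
  have hiS := coe_add_one_mem_Icc i
  have hkS := coe_add_one_mem_Icc k
  have hcancel := Matrix.sum_trace_schlesinger_div_eq_zero hτ (fun j => A j t)
    (fun j => pder k (A j) t) hiS hkS (fun h => hik (Fin.ext (by omega)))
    (fun j hj hjk => by rw [hsol.2 t ht k j hj, if_neg (Ne.symm hjk), tval_coe_add_one]; rfl)
    (by rw [hsol.2 t ht k _ hkS, if_pos rfl]; rfl)
  rw [_root_.fderiv_schH_apply_single_of_ne θ hik
      (fun j hj a b => (hsol.1 j hj a b).differentiableAt (hU.mem_nhds ht)) hτ,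
    add_eq_left]
  simpa only [tval_coe_add_one] using hcancel

end Hamiltonians

theorem sch_tau_form_closed_general (N : ℕ) (U : Set (Fin N → ℂ))
    (hUopen : IsOpen U) (hUsub : U ⊆ goodDomain N)
    (A : ℕ → (Fin N → ℂ) → Matrix (Fin 2) (Fin 2) ℂ) (θ : ℕ → ℂ)
    (hsol : SolvesSch U A) :
    ∀ t ∈ U, ∀ i k : Fin N,
      fderiv ℂ (schH A θ i) t (Pi.single k 1) =
        fderiv ℂ (schH A θ k) t (Pi.single i 1) := by
  intro t ht i k
  rcases eq_or_ne i k with rfl | hik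
  · rfl
  rw [hsol.fderiv_schH_apply_single_of_ne hUopen hUsub θ ht hik,
    hsol.fderiv_schH_apply_single_of_ne hUopen hUsub θ ht hik.symm, Matrix.trace_mul_comm,
    mul_comm (θ _), ← neg_sub (t k), neg_sq]

/-- **Closedness of the τ-form for the classical Schlesinger system**: if
`A_1, …, A_{N+2}` solve `S(1,…,1;N)` on a connected open `U` contained in the good
domain, with `det A_j = 0` and `tr A_j = θ_j` constant for `j = 1, …, N+2`, and
`−Σ_{j=1}^{N+2} A_j = diag(ρ, ρ + θ_{N+3})` constant, then
`∂H_i/∂t_k = ∂H_k/∂t_i` on `U`. -/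
theorem sch_tau_form_closed (N : ℕ) (hN : 0 < N) (U : Set (Fin N → ℂ))
    (hUopen : IsOpen U) (hUconn : IsConnected U) (hUsub : U ⊆ goodDomain N)
    (A : ℕ → (Fin N → ℂ) → Matrix (Fin 2) (Fin 2) ℂ) (θ : ℕ → ℂ) (ρ : ℂ)
    (hsol : SolvesSch U A)
    (hdet : ∀ j ∈ Icc 1 (N + 2), ∀ t ∈ U, (A j t).det = 0)
    (htr : ∀ j ∈ Icc 1 (N + 2), ∀ t ∈ U, (A j t).trace = θ j)
    (hinf : ∀ t ∈ U, (-∑ j ∈ Icc 1 (N + 2), A j t) = !![ρ, 0; 0, ρ + θ (N + 3)]) :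
    ∀ t ∈ U, ∀ i k : Fin N,
      fderiv ℂ (schH A θ i) t (Pi.single k 1) =
        fderiv ℂ (schH A θ k) t (Pi.single i 1) :=
  sch_tau_form_closed_general N U hUopen hUsub A θ hsol
end

section
/- Conservation of the residue matrix at infinity along the degenerate Schlesinger flow: let A_1, …, A_{N+2} : U → M_2(ℂ) be holomorphic maps solving the degenerate Schlesinger system S(1,…,1,2;N) on the connected open set U. Then the matrix-valued function A_∞(t) := −Σ_{j=2}^{N+2} A_j(t) is constant on U. -/
open Finset

lemma mComm_add_mComm (X Y : Matrix (Fin 2) (Fin 2) ℂ) : mComm X Y + mComm Y X = 0 := by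
  simp [mComm]

lemma mComm_anti (X Y : Matrix (Fin 2) (Fin 2) ℂ) : mComm X Y = -mComm Y X := by
  simp [mComm]

lemma smul_pair_zero (c : ℂ) (X Y : Matrix (Fin 2) (Fin 2) ℂ) :
    c • mComm X Y + c • mComm Y X = 0 := by
  rw [← smul_add, mComm_add_mComm, smul_zero]

/-- Constancy of a ℂ-differentiable function with zero derivative on an open
preconnected set. -/
lemma const_of_fderiv_zero {n : ℕ} {U : Set (Fin n → ℂ)} (hUopen : IsOpen U)
    (hconn : IsPreconnected U) (g : (Fin n → ℂ) → ℂ)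
    (hdiff : ∀ t ∈ U, DifferentiableAt ℂ g t)
    (hz : ∀ t ∈ U, fderiv ℂ g t = 0) :
    ∀ x ∈ U, ∀ y ∈ U, g x = g y := by
  intro x hx y hy
  haveI : PreconnectedSpace U := Subtype.preconnectedSpace hconn
  have hloc : IsLocallyConstant (fun z : U => g z.1) := by
    rw [IsLocallyConstant.iff_exists_open]
    rintro ⟨z, hz0⟩
    obtain ⟨ε, hε, hball⟩ := Metric.isOpen_iff.1 hUopen z hz0
    refine ⟨Subtype.val ⁻¹' Metric.ball z ε, Metric.isOpen_ball.preimage continuous_subtype_val,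
      Set.mem_preimage.2 (Metric.mem_ball_self hε), ?_⟩
    rintro ⟨w, hw0⟩ hw
    have hconv : Convex ℝ (Metric.ball z ε) := convex_ball z ε
    refine hconv.is_const_of_fderivWithin_eq_zero (fun p hp => (hdiff p (hball hp)).differentiableWithinAt) (fun p hp => ?_) hw (Metric.mem_ball_self hε : z ∈ Metric.ball z ε)
    rw [fderivWithin_of_isOpen Metric.isOpen_ball hp]
    exact hz p (hball hp)
  exact hloc.apply_eq_of_preconnectedSpace ⟨x, hx⟩ ⟨y, hy⟩

lemma sum_pder_zero {N : ℕ} {U : Set (Fin N → ℂ)}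
    (A : ℕ → (Fin N → ℂ) → Matrix (Fin 2) (Fin 2) ℂ) (hsol : SolvesDegSch U A)
    {t : Fin N → ℂ} (ht : t ∈ U) (k : Fin N) :
    ∑ j ∈ Icc 2 (N + 2), pder k (A j) t = 0 := by
  obtain ⟨-, h2, h3⟩ := hsol.2 t ht k
  have hsplit : Icc 2 (N + 2) = insert (N + 2) (Icc 2 (N + 1)) := by
    ext x; simp only [Finset.mem_Icc, Finset.mem_insert]; omega
  rw [hsplit, Finset.sum_insert (by simp [Finset.mem_Icc])]
  by_cases hk : (k : ℕ) = 0
  · rw [h3, if_pos hk]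
    have hrest : ∑ j ∈ Icc 2 (N + 1), pder k (A j) t =
        ∑ j ∈ Icc 2 (N + 1), (-(tval t j * t k)⁻¹) • mComm (A 1 t) (A j t) := by
      refine Finset.sum_congr rfl fun j hj => ?_
      simp only [Finset.mem_Icc] at hj
      rw [h2 j (by simp only [Finset.mem_Icc]; omega), if_neg (by omega), if_pos hk]
    rw [hrest, ← Finset.sum_add_distrib]
    exact Finset.sum_eq_zero fun j hj => smul_pair_zero _ _ _
  · set m : ℕ := (k : ℕ) + 1 with hm
    have hkN : (k : ℕ) < N := k.isLt
    have hmmem : m ∈ Icc 2 (N + 1) := by simp only [Finset.mem_Icc]; omega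
    have htm : tval t m = t k := by
      unfold tval
      rw [dif_pos ⟨by omega, by omega⟩]
      exact congrArg t (Fin.ext (by simp [hm]))
    have htN2 : tval t (N + 2) = (0 : ℂ) := by
      unfold tval
      rw [dif_neg (by omega), if_neg (by omega)]
    have hE : (Icc 2 (N + 2)).erase m = insert (N + 2) ((Icc 2 (N + 1)).erase m) := by
      ext x
      simp only [Finset.mem_Icc, Finset.mem_insert, Finset.mem_erase]
      omega
    have hNE : (N + 2) ∉ (Icc 2 (N + 1)).erase m := by
      simp only [Finset.mem_erase, Finset.mem_Icc]; omega
    rw [← Finset.add_sum_erase _ _ hmmem]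
    have hdiag : pder k (A m) t =
        (((t k - tval t (N + 2))⁻¹ • mComm (A (N + 2) t) (A m t) +
          ∑ i ∈ (Icc 2 (N + 1)).erase m, (t k - tval t i)⁻¹ • mComm (A i t) (A m t)) +
          ((t k) ^ 2)⁻¹ • mComm (A 1 t) (A m t)) := by
      rw [h2 m hmmem, if_pos rfl, hE, Finset.sum_insert hNE, htm]
    have hrest : ∑ j ∈ (Icc 2 (N + 1)).erase m, pder k (A j) t =
        ∑ j ∈ (Icc 2 (N + 1)).erase m, (t k - tval t j)⁻¹ • mComm (A m t) (A j t) := by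
      refine Finset.sum_congr rfl fun j hj => ?_
      obtain ⟨hjm, hj⟩ := Finset.mem_erase.1 hj
      rw [h2 j hj, if_neg (by omega), if_neg hk, ← inv_neg, neg_sub]
    rw [h3, if_neg hk, hdiag, hrest, htN2, sub_zero]
    have habel :
        ((t k) ^ 2)⁻¹ • mComm (A m t) (A 1 t) + (t k)⁻¹ • mComm (A m t) (A (N + 2) t) +
          ((((t k)⁻¹ • mComm (A (N + 2) t) (A m t) +
            ∑ i ∈ (Icc 2 (N + 1)).erase m, (t k - tval t i)⁻¹ • mComm (A i t) (A m t)) +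
            ((t k) ^ 2)⁻¹ • mComm (A 1 t) (A m t)) +
            ∑ j ∈ (Icc 2 (N + 1)).erase m, (t k - tval t j)⁻¹ • mComm (A m t) (A j t)) =
        (((t k) ^ 2)⁻¹ • mComm (A m t) (A 1 t) + ((t k) ^ 2)⁻¹ • mComm (A 1 t) (A m t)) +
          (((t k)⁻¹ • mComm (A m t) (A (N + 2) t) + (t k)⁻¹ • mComm (A (N + 2) t) (A m t)) +
          ((∑ i ∈ (Icc 2 (N + 1)).erase m, (t k - tval t i)⁻¹ • mComm (A i t) (A m t)) +
            ∑ j ∈ (Icc 2 (N + 1)).erase m, (t k - tval t j)⁻¹ • mComm (A m t) (A j t))) := by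
      abel
    rw [habel, smul_pair_zero, smul_pair_zero, ← Finset.sum_add_distrib,
      Finset.sum_eq_zero fun j hj => smul_pair_zero _ _ _]
    simp

/-- **Conservation of the residue matrix at infinity along the degenerate Schlesinger
flow**: if `A_1, …, A_{N+2}` solve `S(1,…,1,2;N)` on a connected open `U` contained in
the good domain, then `A_∞(t) := −Σ_{j=2}^{N+2} A_j(t)` is constant on `U`. -/

theorem degSch_residue_at_infinity_conserved (N : ℕ) (hN : 0 < N)
    (U : Set (Fin N → ℂ)) (hUopen : IsOpen U) (hUconn : IsConnected U)
    (hUsub : U ⊆ goodDomain N)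
    (A : ℕ → (Fin N → ℂ) → Matrix (Fin 2) (Fin 2) ℂ)
    (hsol : SolvesDegSch U A) :
    ∃ C : Matrix (Fin 2) (Fin 2) ℂ, ∀ t ∈ U, (-∑ j ∈ Icc 2 (N + 2), A j t) = C := by
  obtain ⟨t0, ht0⟩ := hUconn.nonempty
  refine ⟨-∑ j ∈ Icc 2 (N + 2), A j t0, fun t ht => ?_⟩
  have hdiffAt : ∀ j ∈ Icc 2 (N + 2), ∀ (a b : Fin 2), ∀ s ∈ U,
      DifferentiableAt ℂ (fun u => A j u a b) s := by
    intro j hj a b s hs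
    simp only [Finset.mem_Icc] at hj
    exact (hsol.1 j (by simp only [Finset.mem_Icc]; omega) a b).differentiableAt
      (hUopen.mem_nhds hs)
  have hentry : ∀ a b : Fin 2,
      (∑ j ∈ Icc 2 (N + 2), A j t) a b = (∑ j ∈ Icc 2 (N + 2), A j t0) a b := by
    intro a b
    have := const_of_fderiv_zero hUopen hUconn.isPreconnected
      (fun s => ∑ j ∈ Icc 2 (N + 2), A j s a b)
      (fun s hs => DifferentiableAt.fun_sum fun j hj => hdiffAt j hj a b s hs)
      (fun s hs => ?_) t ht t0 ht0
    · simpa [Matrix.sum_apply] using this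
    · apply ContinuousLinearMap.coe_injective
      apply Module.Basis.ext (Pi.basisFun ℂ (Fin N))
      intro k
      have hf : fderiv ℂ (fun s => ∑ j ∈ Icc 2 (N + 2), A j s a b) s =
          ∑ j ∈ Icc 2 (N + 2), fderiv ℂ (fun u => A j u a b) s :=
        fderiv_fun_sum fun j hj => hdiffAt j hj a b s hs
      have hkey : (∑ j ∈ Icc 2 (N + 2), pder k (A j) s) a b = 0 := by
        rw [sum_pder_zero A hsol hs k]; rfl
      simp only [Matrix.sum_apply] at hkey
      have : fderiv ℂ (fun s => ∑ j ∈ Icc 2 (N + 2), A j s a b) s (Pi.single k 1) = 0 := by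
        rw [hf, ContinuousLinearMap.sum_apply]
        exact hkey
      simpa [Pi.basisFun_apply] using this
  have : (∑ j ∈ Icc 2 (N + 2), A j t) = ∑ j ∈ Icc 2 (N + 2), A j t0 := by
    ext a b; exact hentry a b
  rw [this]
end

section
/- Conservation of determinants along the degenerate Schlesinger flow: let A_1, …, A_{N+2} : U → M_2(ℂ) be holomorphic maps solving the degenerate Schlesinger system S(1,…,1,2;N) on the connected open set U. Then for each j = 2, …, N+1 the function t ↦ det A_j(t) is constant on U, and there exists a constant c ∈ ℂ such that det A_1(t) = c · t_1² for all t ∈ U. In particular, if det A_1 vanishes at one point of U then det A_1 ≡ 0 on U. -/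
open Finset

/-!
For `2 × 2` matrices the derivative of `det` at `Y` in the direction `D` is `tr (adj Y * D)`.
Since `adj Y` commutes with `Y`, this vanishes on every commutator `[X, Y]`, and it equals
`2 det Y` for `D = Y`. Each equation for `A_j`, `2 ≤ j ≤ N + 1`, has only commutators `[·, A_j]`
on its right-hand side, so `det A_j` is constant. In the equation for `A_1` the only other term is
`A_1 dt_1 / t_1`, so `d (det A_1) = 2 det A_1 dt_1 / t_1` and `det A_1 / t_1²` is constant.
-/

open Matrix

namespace Matrix

variable {n R : Type*} [Fintype n] [DecidableEq n] [CommRing R]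

theorem trace_adjugate_mul_commutator (X Y : Matrix n n R) :
    trace (adjugate Y * (X * Y - Y * X)) = 0 := by
  have hcycle : trace (adjugate Y * X * Y) = trace (det Y • X) := by
    rw [trace_mul_comm, ← Matrix.mul_assoc, mul_adjugate, smul_mul, one_mul]
  rw [Matrix.mul_sub, ← Matrix.mul_assoc, ← Matrix.mul_assoc, adjugate_mul, smul_mul, one_mul,
    trace_sub, hcycle, sub_self]

theorem trace_adjugate_mul_self (Y : Matrix n n R) :
    trace (adjugate Y * Y) = Fintype.card n * det Y := by
  rw [adjugate_mul, trace_smul, trace_one, smul_eq_mul, mul_comm]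

end Matrix

theorem ContinuousLinearMap.ext_pi_single {ι R F : Type*} [Fintype ι] [DecidableEq ι]
    [Semiring R] [TopologicalSpace R] [AddCommMonoid F] [Module R F] [TopologicalSpace F]
    {L M : (ι → R) →L[R] F} (h : ∀ i, L (Pi.single i 1) = M (Pi.single i 1)) : L = M :=
  ContinuousLinearMap.coe_injective ((Pi.basisFun R ι).ext fun i => by simpa using h i)

section DetDeriv

variable {𝕜 E : Type*} [NontriviallyNormedField 𝕜] [NormedAddCommGroup E] [NormedSpace 𝕜 E]
  {f : E → Matrix (Fin 2) (Fin 2) 𝕜} {t : E}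

theorem differentiableAt_det_fin_two (hf : ∀ a b, DifferentiableAt 𝕜 (fun s => f s a b) t) :
    DifferentiableAt 𝕜 (fun s => (f s).det) t := by
  simp only [det_fin_two]
  exact ((hf 0 0).mul (hf 1 1)).sub ((hf 0 1).mul (hf 1 0))

theorem fderiv_det_fin_two_apply (hf : ∀ a b, DifferentiableAt 𝕜 (fun s => f s a b) t) (v : E) :
    fderiv 𝕜 (fun s => (f s).det) t v =
      trace (adjugate (f t) * of fun a b => fderiv 𝕜 (fun s => f s a b) t v) := by
  simp only [det_fin_two]
  have hdet : HasFDerivAt (fun s => f s 0 0 * f s 1 1 - f s 0 1 * f s 1 0) _ t :=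
    ((hf 0 0).hasFDerivAt.mul (hf 1 1).hasFDerivAt).sub
      ((hf 0 1).hasFDerivAt.mul (hf 1 0).hasFDerivAt)
  rw [hdet.fderiv]
  simp only [trace_fin_two, mul_apply, Fin.sum_univ_two, adjugate_fin_two, of_apply,
    cons_val_zero, cons_val_one, _root_.sub_apply, _root_.add_apply, _root_.smul_apply]
  ring

end DetDeriv

theorem IsOpen.exists_eq_const_mul_of_fderiv {𝕜 E : Type*} [RCLike 𝕜] [NormedAddCommGroup E]
    [NormedSpace ℝ E] [NormedSpace 𝕜 E] {U : Set E} (hU : IsOpen U) (hU' : IsPreconnected U)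
    {f p : E → 𝕜} (hf : DifferentiableOn 𝕜 f U) (hp : DifferentiableOn 𝕜 p U)
    (hp0 : ∀ t ∈ U, p t ≠ 0) (h : ∀ t ∈ U, p t • fderiv 𝕜 f t = f t • fderiv 𝕜 p t) :
    ∃ c, ∀ t ∈ U, f t = c * p t := by
  have hquot : ∀ t ∈ U, HasFDerivAt (fun s => f s * (p s)⁻¹) (0 : E →L[𝕜] 𝕜) t := by
    intro t ht
    have hft := (hf.differentiableAt (hU.mem_nhds ht)).hasFDerivAt
    have hpt : HasFDerivAt (fun s => (p s)⁻¹) ((-(p t ^ 2)⁻¹) • fderiv 𝕜 p t) t :=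
      (hasDerivAt_inv (hp0 t ht)).comp_hasFDerivAt t
        (hp.differentiableAt (hU.mem_nhds ht)).hasFDerivAt
    refine (hft.mul hpt).congr_fderiv ?_
    ext v
    have hv := congrArg (fun L : E →L[𝕜] 𝕜 => L v) (h t ht)
    simp only [_root_.smul_apply, smul_eq_mul] at hv
    simp only [_root_.add_apply, _root_.smul_apply, smul_eq_mul, _root_.zero_apply]
    field_simp [hp0 t ht]
    linear_combination hv
  obtain ⟨c, hc⟩ := hU.exists_is_const_of_fderiv_eq_zero hU'
    (fun t ht => (hquot t ht).differentiableAt.differentiableWithinAt)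
    (fun t ht => (hquot t ht).fderiv)
  refine ⟨c, fun t ht => ?_⟩
  rw [← hc t ht, inv_mul_cancel_right₀ (hp0 t ht)]

theorem trace_adjugate_mul_mComm (X Y : Matrix (Fin 2) (Fin 2) ℂ) :
    trace (adjugate Y * mComm X Y) = 0 :=
  trace_adjugate_mul_commutator X Y

namespace SolvesDegSch

variable {N : ℕ} {U : Set (Fin N → ℂ)} {A : ℕ → (Fin N → ℂ) → Matrix (Fin 2) (Fin 2) ℂ}
  {j : ℕ} {t : Fin N → ℂ}

theorem differentiableAt_apply (hsol : SolvesDegSch U A) (hU : IsOpen U) (hj : j ∈ Icc 1 (N + 2))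
    (ht : t ∈ U) (a b : Fin 2) : DifferentiableAt ℂ (fun s => A j s a b) t :=
  (hsol.1 j hj a b).differentiableAt (hU.mem_nhds ht)

theorem differentiableOn_det (hsol : SolvesDegSch U A) (hU : IsOpen U) (hj : j ∈ Icc 1 (N + 2)) :
    DifferentiableOn ℂ (fun s => (A j s).det) U := fun _ ht =>
  (differentiableAt_det_fin_two (hsol.differentiableAt_apply hU hj ht)).differentiableWithinAt

theorem fderiv_det_apply_single (hsol : SolvesDegSch U A) (hU : IsOpen U)
    (hj : j ∈ Icc 1 (N + 2)) (ht : t ∈ U) (k : Fin N) :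
    fderiv ℂ (fun s => (A j s).det) t (Pi.single k 1) = trace (adjugate (A j t) * pder k (A j) t) :=
  fderiv_det_fin_two_apply (hsol.differentiableAt_apply hU hj ht) _

theorem trace_adjugate_mul_pder_eq_zero (hsol : SolvesDegSch U A) (hj : j ∈ Icc 2 (N + 1))
    (ht : t ∈ U) (k : Fin N) : trace (adjugate (A j t) * pder k (A j) t) = 0 := by
  rw [(hsol.2 t ht k).2.1 j hj]
  split_ifs <;>
    simp only [Matrix.mul_add, Matrix.mul_sum, Matrix.mul_smul, trace_add, trace_sum, trace_smul,
      trace_adjugate_mul_mComm, smul_zero, sum_const_zero, add_zero]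

theorem trace_adjugate_mul_pder_one (hsol : SolvesDegSch U A) (ht : t ∈ U) (k : Fin N) :
    trace (adjugate (A 1 t) * pder k (A 1) t) =
      if (k : ℕ) = 0 then 2 * (t k)⁻¹ * (A 1 t).det else 0 := by
  rw [(hsol.2 t ht k).1]
  split_ifs
  · rw [Matrix.mul_smul, Matrix.mul_add, trace_smul, trace_add, trace_adjugate_mul_self,
      trace_adjugate_mul_mComm, smul_eq_mul]
    simp only [Fintype.card_fin, Nat.cast_ofNat, add_zero]
    ring
  · rw [Matrix.mul_smul, trace_smul, trace_adjugate_mul_mComm, smul_zero]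

theorem exists_det_eq_const (hsol : SolvesDegSch U A) (hU : IsOpen U) (hU' : IsPreconnected U)
    (hj : j ∈ Icc 2 (N + 1)) : ∃ c : ℂ, ∀ t ∈ U, (A j t).det = c := by
  have hj' : j ∈ Icc 1 (N + 2) := by simp only [mem_Icc] at hj ⊢; omega
  refine hU.exists_is_const_of_fderiv_eq_zero hU' (hsol.differentiableOn_det hU hj')
    fun t ht => ContinuousLinearMap.ext_pi_single fun k => ?_
  rw [hsol.fderiv_det_apply_single hU hj' ht, hsol.trace_adjugate_mul_pder_eq_zero hj ht]
  rfl

theorem exists_det_one_eq_mul_sq (hsol : SolvesDegSch U A) (hU : IsOpen U)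
    (hU' : IsPreconnected U) (hN : 0 < N) (ht₁ : ∀ t ∈ U, t ⟨0, hN⟩ ≠ 0) :
    ∃ c : ℂ, ∀ t ∈ U, (A 1 t).det = c * t ⟨0, hN⟩ ^ 2 := by
  have hone : 1 ∈ Icc 1 (N + 2) := by simp
  refine hU.exists_eq_const_mul_of_fderiv hU' (hsol.differentiableOn_det hU hone)
    (by fun_prop) (fun t ht => pow_ne_zero 2 (ht₁ t ht)) fun t ht =>
      ContinuousLinearMap.ext_pi_single fun k => ?_
  have hsq := (hasFDerivAt_apply (𝕜 := ℂ) ⟨0, hN⟩ t).pow 2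
  simp only [_root_.smul_apply, smul_eq_mul, hsq.fderiv, ContinuousLinearMap.proj_apply,
    hsol.fderiv_det_apply_single hU hone ht, hsol.trace_adjugate_mul_pder_one ht]
  split_ifs with hk
  · obtain rfl : k = ⟨0, hN⟩ := Fin.ext hk
    simp only [Pi.single_eq_same, nsmul_eq_mul, Nat.cast_ofNat, mul_one]
    field_simp [ht₁ t ht]
    ring
  · rw [Pi.single_eq_of_ne' (fun h => hk (congrArg Fin.val h)), mul_zero, mul_zero, mul_zero]

end SolvesDegSch

/-- **Conservation of determinants along the degenerate Schlesinger flow**: if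
`A_1, …, A_{N+2}` solve `S(1,…,1,2;N)` on a connected open `U` contained in the good
domain, then `det A_j` is constant on `U` for each `j = 2, …, N+1`, there is a constant
`c ∈ ℂ` with `det A_1(t) = c · t_1²` on `U`, and in particular if `det A_1` vanishes at
one point of `U` then `det A_1 ≡ 0` on `U`. -/
theorem degSch_determinants_conserved (N : ℕ) (hN : 0 < N) (U : Set (Fin N → ℂ))
    (hUopen : IsOpen U) (hUconn : IsConnected U) (hUsub : U ⊆ goodDomain N)
    (A : ℕ → (Fin N → ℂ) → Matrix (Fin 2) (Fin 2) ℂ)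
    (hsol : SolvesDegSch U A) :
    (∀ j ∈ Icc 2 (N + 1), ∃ c : ℂ, ∀ t ∈ U, (A j t).det = c) ∧
    (∃ c : ℂ, ∀ t ∈ U, (A 1 t).det = c * (t ⟨0, hN⟩) ^ 2) ∧
    ((∃ t₀ ∈ U, (A 1 t₀).det = 0) → ∀ t ∈ U, (A 1 t).det = 0) := by
  have ht₁ : ∀ t ∈ U, t ⟨0, hN⟩ ≠ 0 := fun t ht => ((hUsub ht).1 _).1
  obtain ⟨c, hc⟩ := hsol.exists_det_one_eq_mul_sq hUopen hUconn.isPreconnected hN ht₁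
  refine ⟨fun j hj => hsol.exists_det_eq_const hUopen hUconn.isPreconnected hj, ⟨c, hc⟩, ?_⟩
  rintro ⟨t₀, ht₀, hdet₀⟩ t ht
  have hc0 : c = 0 := by simpa [ht₁ t₀ ht₀] using (hc t₀ ht₀).symm.trans hdet₀
  rw [hc t ht, hc0, zero_mul]
end

section
/- Conservation of the pairing tr(A_1 A_{N+2}) along the degenerate Schlesinger flow: let A_1, …, A_{N+2} : U → M_2(ℂ) be holomorphic maps solving the degenerate Schlesinger system S(1,…,1,2;N) on the connected open set U. Then there exists a constant c ∈ ℂ such that tr(A_1(t) A_{N+2}(t)) = c · t_1 for all t ∈ U. In particular the normalization tr(A_1 A_{N+2}) = t_1 θ_{N+2} is consistent with the flow. -/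
open Finset

/-! Write `F = tr(A₁ A_{N+2})`. In `∂ₖF = tr(∂ₖA₁ · A_{N+2}) + tr(A₁ · ∂ₖA_{N+2})` every
commutator term of the Schlesinger equations cancels, by the invariance
`tr([X, Y] Z) = tr(X [Y, Z])` of the trace form; only the `A₁ d log t₁` term of `dA₁` survives.
So `∂₁F = F / t₁` and `∂ₖF = 0` for `k ≥ 2`, i.e. `F / t₁` is locally constant on `U`. -/

namespace Matrix

variable {n R : Type*} [Fintype n] [CommRing R] (X Y Z : Matrix n n R)

theorem trace_mul_commutator_self_right : (Y * (X * Y - Y * X)).trace = 0 := by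
  rw [Matrix.mul_sub, trace_sub, ← Matrix.mul_assoc, trace_mul_comm (Y * X), sub_self]

theorem trace_commutator_mul_self_left : ((X * Y - Y * X) * X).trace = 0 := by
  rw [Matrix.sub_mul, trace_sub, Matrix.mul_assoc, trace_mul_comm X, sub_self]

theorem trace_commutator_mul_add_mul_commutator :
    ((X * Y - Y * X) * Z).trace + (Y * (X * Z - Z * X)).trace = 0 := by
  simp only [Matrix.sub_mul, Matrix.mul_sub, trace_sub, ← Matrix.mul_assoc]
  rw [Matrix.mul_assoc X, trace_mul_comm X, Matrix.mul_assoc Y]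
  abel

end Matrix

section MatrixCalculus

variable {𝕜 E n : Type*} [NontriviallyNormedField 𝕜] [NormedAddCommGroup E] [NormedSpace 𝕜 E]
  [Fintype n] {f g : E → Matrix n n 𝕜} {x : E}

theorem trace_mul_eq_sum (X Y : Matrix n n 𝕜) : (X * Y).trace = ∑ a, ∑ b, X a b * Y b a := by
  simp [Matrix.trace, Matrix.mul_apply]

theorem hasFDerivAt_trace_mul (hf : ∀ a b, DifferentiableAt 𝕜 (fun s => f s a b) x)
    (hg : ∀ a b, DifferentiableAt 𝕜 (fun s => g s a b) x) :
    HasFDerivAt (fun s => (f s * g s).trace)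
      (∑ a, ∑ b, (f x a b • fderiv 𝕜 (fun s => g s b a) x +
        g x b a • fderiv 𝕜 (fun s => f s a b) x)) x := by
  simp only [trace_mul_eq_sum]
  exact HasFDerivAt.fun_sum fun a _ => HasFDerivAt.fun_sum fun b _ =>
    (hf a b).hasFDerivAt.mul (hg b a).hasFDerivAt

end MatrixCalculus

theorem fderiv_trace_mul_apply_single {N : ℕ} {f g : (Fin N → ℂ) → Matrix (Fin 2) (Fin 2) ℂ}
    {t : Fin N → ℂ} (hf : ∀ a b, DifferentiableAt ℂ (fun s => f s a b) t)
    (hg : ∀ a b, DifferentiableAt ℂ (fun s => g s a b) t) (k : Fin N) :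
    fderiv ℂ (fun s => (f s * g s).trace) t (Pi.single k 1) =
      (pder k f t * g t).trace + (f t * pder k g t).trace := by
  rw [(hasFDerivAt_trace_mul hf hg).fderiv, trace_mul_eq_sum, trace_mul_eq_sum,
    ← Finset.sum_add_distrib]
  simp only [FunLike.coe_sum, Finset.sum_apply, add_apply, FunLike.coe_smul, Pi.smul_apply,
    smul_eq_mul, pder, Matrix.of_apply, ← Finset.sum_add_distrib]
  exact Finset.sum_congr rfl fun a _ => Finset.sum_congr rfl fun b _ => by ring

theorem IsOpen.exists_eq_const_mul_of_fderiv_s8 {𝕜 E : Type*} [NontriviallyNormedField 𝕜]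
    [IsRCLikeNormedField 𝕜] [NormedAddCommGroup E] [NormedSpace ℝ E] [NormedSpace 𝕜 E]
    {s : Set E} {f g : E → 𝕜} (hs : IsOpen s) (hs' : IsPreconnected s)
    (hf : DifferentiableOn 𝕜 f s) (hg : DifferentiableOn 𝕜 g s) (hg₀ : ∀ x ∈ s, g x ≠ 0)
    (hfg : ∀ x ∈ s, g x • fderiv 𝕜 f x = f x • fderiv 𝕜 g x) :
    ∃ c, ∀ x ∈ s, f x = c * g x := by
  have hquot : s.EqOn (fderiv 𝕜 fun x => f x * (g x)⁻¹) 0 := by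
    intro x hx
    have hfx := (hf.differentiableAt (hs.mem_nhds hx)).hasFDerivAt
    have hgx := (hg.differentiableAt (hs.mem_nhds hx)).hasFDerivAt
    have hderiv : HasFDerivAt (fun x => f x * (g x)⁻¹) _ x :=
      hfx.mul ((hasDerivAt_inv (hg₀ x hx)).comp_hasFDerivAt x hgx)
    rw [hderiv.fderiv, Pi.zero_apply]
    calc f x • (-(g x ^ 2)⁻¹) • fderiv 𝕜 g x + (g x)⁻¹ • fderiv 𝕜 f x
        = (g x ^ 2)⁻¹ • (g x • fderiv 𝕜 f x - f x • fderiv 𝕜 g x) := by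
          match_scalars <;> field_simp [hg₀ x hx]
      _ = 0 := by rw [hfg x hx, sub_self, smul_zero]
  obtain ⟨c, hc⟩ :=
    hs.exists_is_const_of_fderiv_eq_zero hs' (hf.fun_mul (hg.fun_inv hg₀)) hquot
  exact ⟨c, fun x hx => by rw [← hc x hx, mul_assoc, inv_mul_cancel₀ (hg₀ x hx), mul_one]⟩

namespace SolvesDegSch

variable {N : ℕ} {U : Set (Fin N → ℂ)} {A : ℕ → (Fin N → ℂ) → Matrix (Fin 2) (Fin 2) ℂ}
  {t : Fin N → ℂ}

theorem differentiableAt (hsol : SolvesDegSch U A) (hU : IsOpen U) {j : ℕ}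
    (hj : j ∈ Icc 1 (N + 2)) (ht : t ∈ U) (a b : Fin 2) :
    DifferentiableAt ℂ (fun s => A j s a b) t :=
  (hsol.1 j hj a b).differentiableAt (hU.mem_nhds ht)

theorem trace_pder_pairing (hsol : SolvesDegSch U A) (ht : t ∈ U) (k : Fin N) :
    (pder k (A 1) t * A (N + 2) t).trace + (A 1 t * pder k (A (N + 2)) t).trace =
      if (k : ℕ) = 0 then (t k)⁻¹ * (A 1 t * A (N + 2) t).trace else 0 := by
  obtain ⟨hA₁, -, hA₂⟩ := hsol.2 t ht k
  rw [hA₁, hA₂]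
  by_cases hk : (k : ℕ) = 0
  · simp only [if_pos hk, Matrix.mul_sum, Matrix.trace_sum, Matrix.mul_smul, Matrix.smul_mul,
      Matrix.trace_smul, Matrix.add_mul, Matrix.trace_add, mComm,
      Matrix.trace_mul_commutator_self_right, Matrix.trace_commutator_mul_self_left, smul_eq_mul,
      mul_zero, Finset.sum_const_zero, add_zero]
  · simp only [if_neg hk, Matrix.mul_add, Matrix.trace_add, Matrix.mul_smul, Matrix.smul_mul,
      Matrix.trace_smul, mComm, Matrix.trace_mul_commutator_self_right, smul_zero, zero_add,
      ← smul_add, Matrix.trace_commutator_mul_add_mul_commutator]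

theorem differentiableOn_pairing (hsol : SolvesDegSch U A) (hU : IsOpen U) :
    DifferentiableOn ℂ (fun s => (A 1 s * A (N + 2) s).trace) U := fun _ ht =>
  (hasFDerivAt_trace_mul (hsol.differentiableAt hU (by simp) ht)
    (hsol.differentiableAt hU (by simp) ht)).differentiableAt.differentiableWithinAt

theorem smul_fderiv_pairing (hsol : SolvesDegSch U A) (hU : IsOpen U) (hN : 0 < N)
    (ht : t ∈ U) (ht₀ : t ⟨0, hN⟩ ≠ 0) :
    t ⟨0, hN⟩ • fderiv ℂ (fun s => (A 1 s * A (N + 2) s).trace) t =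
      (A 1 t * A (N + 2) t).trace • fderiv ℂ (fun s => s ⟨0, hN⟩) t := by
  rw [(hasFDerivAt_apply ⟨0, hN⟩ t).fderiv]
  refine ContinuousLinearMap.coe_injective ((Pi.basisFun ℂ (Fin N)).ext fun k => ?_)
  simp only [Pi.basisFun_apply, ContinuousLinearMap.coe_coe, FunLike.coe_smul, Pi.smul_apply,
    smul_eq_mul, ContinuousLinearMap.proj_apply]
  rw [fderiv_trace_mul_apply_single (hsol.differentiableAt hU (by simp) ht)
    (hsol.differentiableAt hU (by simp) ht) k, hsol.trace_pder_pairing ht k]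
  by_cases hk : (k : ℕ) = 0
  · obtain rfl : k = ⟨0, hN⟩ := Fin.ext hk
    rw [if_pos hk, Pi.single_eq_same, mul_inv_cancel_left₀ ht₀, mul_one]
  · rw [if_neg hk, Pi.single_eq_of_ne (fun h => hk (by rw [← h])), mul_zero, mul_zero]

end SolvesDegSch

/-- **Conservation of the pairing `tr(A_1 A_{N+2})` along the degenerate Schlesinger
flow**: if `A_1, …, A_{N+2}` solve `S(1,…,1,2;N)` on a connected open `U` contained in
the good domain, then there is a constant `c ∈ ℂ` with
`tr(A_1(t) A_{N+2}(t)) = c · t_1` on `U` (so the normalisation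
`tr(A_1 A_{N+2}) = t_1 θ_{N+2}` is consistent with the flow). -/
theorem degSch_pairing_conserved (N : ℕ) (hN : 0 < N) (U : Set (Fin N → ℂ))
    (hUopen : IsOpen U) (hUconn : IsConnected U) (hUsub : U ⊆ goodDomain N)
    (A : ℕ → (Fin N → ℂ) → Matrix (Fin 2) (Fin 2) ℂ)
    (hsol : SolvesDegSch U A) :
    ∃ c : ℂ, ∀ t ∈ U, (A 1 t * A (N + 2) t).trace = c * t ⟨0, hN⟩ := by
  have ht₀ : ∀ t ∈ U, t ⟨0, hN⟩ ≠ 0 := fun t ht => ((hUsub ht).1 _).1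
  exact hUopen.exists_eq_const_mul_of_fderiv_s8 hUconn.isPreconnected
    (hsol.differentiableOn_pairing hUopen) (differentiableOn_apply _ _) ht₀
    fun t ht => hsol.smul_fderiv_pairing hUopen hN ht (ht₀ t ht)
end
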